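/- arXiv:2307.09608 — 7 statements merged into one kernel-verified Lean document; each statement's English description precedes it below -/
import Mathlib

section
/- For all positive integers n, d, χ with 2 ≤ d+χ ≤ n, the ratio C(n, ⌊n/(d+χ)⌋) / C(n-d-χ, ⌊n/(d+χ)⌋ - 1) is at most 2e(d+χ). -/
/-- For positive integers `n, d, χ` with `2 ≤ d+χ ≤ n`, the ratio
`C(n, ⌊n/(d+χ)⌋) / C(n-d-χ, ⌊n/(d+χ)⌋-1)` is at most `2e(d+χ)`. -/
theorem binom_ratio_le (n d χ : ℕ) (hd : 0 < d) (hχ : 0 < χ)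
    (h2 : 2 ≤ d + χ) (hn : d + χ ≤ n) :
    (n.choose (n / (d + χ)) : ℝ) / ((n - (d + χ)).choose (n / (d + χ) - 1)) ≤
      2 * Real.exp 1 * (d + χ) := by
  have hkR : ((d : ℝ) + (χ : ℝ)) = ((d + χ : ℕ) : ℝ) := by push_cast; ring
  rw [hkR]
  obtain ⟨k, hkk⟩ : ∃ k, d + χ = k := ⟨_, rfl⟩
  rw [hkk] at h2 hn ⊢
  obtain ⟨m, hm⟩ : ∃ m, n / k = m := ⟨_, rfl⟩
  rw [hm]
  have hk2 : 2 ≤ k := h2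
  have hkpos : 0 < k := by omega
  have hm1 : 1 ≤ m := hm ▸ (Nat.one_le_div_iff hkpos).mpr hn
  have hmk : m * k ≤ n := hm ▸ Nat.div_mul_le_self n k
  have hnlt : n < m * k + k := by
    have := Nat.lt_div_mul_add (a := n) hkpos
    rwa [hm] at this
  have hexp1 : (1:ℝ) ≤ Real.exp 1 := Real.one_le_exp (by norm_num)
  rcases eq_or_lt_of_le hm1 with hm1' | hm2
  · -- m = 1 case
    subst hm1'
    simp only [Nat.choose_one_right, Nat.sub_self, Nat.choose_zero_right, Nat.cast_one, div_one]
    have hn2k : (n:ℝ) ≤ 2 * k := by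
      have : n ≤ 2 * k := by omega
      exact_mod_cast this
    have hknn : (0:ℝ) ≤ (k:ℝ) := by positivity
    nlinarith
  · -- m ≥ 2 case
    have hm2' : 2 ≤ m := hm2
    have hmkn : m + k ≤ n := le_trans (Nat.add_le_mul hm2' hk2) hmk
    have hDpos : 0 < (n - k).choose (m - 1) := Nat.choose_pos (by omega)
    have natid : ∀ a b : ℕ, (a + 1) * a.choose b = (a + 1).choose b * (a + 1 - b) := by
      intro a b
      rw [← Nat.choose_succ_right_eq]
      simpa [Nat.succ_eq_add_one] using Nat.add_one_mul_choose_eq a b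
    obtain ⟨A, hA⟩ : ∃ A, n - k + 1 = A := ⟨_, rfl⟩
    obtain ⟨B, hB⟩ : ∃ B, n + 2 - k - m = B := ⟨_, rfl⟩
    have hBpos : 0 < B := by omega
    have hBA : B ≤ A := by omega
    have hAB' : A = B + (m - 1) := by omega
    have hAm : m + 1 ≤ A := by
      have h2m : m * 2 ≤ m * k := Nat.mul_le_mul_left m hk2
      omega
    -- single step
    have stepN : ∀ a : ℕ, A ≤ a → B * a.choose (m - 1) ≤ A * (a - 1).choose (m - 1) := by
      intro a ha
      have ha1 : 1 ≤ a := by omega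
      have ham : m ≤ a := by omega
      have hid := natid (a - 1) (m - 1)
      rw [show a - 1 + 1 = a by omega] at hid
      have hpos : 0 < a - (m - 1) := by omega
      have hBa : B * a ≤ A * (a - (m - 1)) := by
        obtain ⟨s, hs⟩ := Nat.exists_eq_add_of_le ha
        have hsub : a - (m - 1) = B + s := by omega
        rw [hsub, hs, hAB']
        calc B * (B + (m - 1) + s) = (B + (m-1)) * B + B * s := by ring
          _ ≤ (B + (m-1)) * B + (B + (m-1)) * s :=
              Nat.add_le_add_left (Nat.mul_le_mul_right s (by omega)) _
          _ = (B + (m - 1)) * (B + s) := by ring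
      apply Nat.le_of_mul_le_mul_right _ hpos
      calc B * a.choose (m - 1) * (a - (m - 1))
          = B * (a.choose (m - 1) * (a - (m - 1))) := by ring
        _ = B * (a * (a - 1).choose (m - 1)) := by rw [hid]
        _ = (B * a) * (a - 1).choose (m - 1) := by ring
        _ ≤ (A * (a - (m - 1))) * (a - 1).choose (m - 1) := Nat.mul_le_mul_right _ hBa
        _ = A * (a - 1).choose (m - 1) * (a - (m - 1)) := by ring
    -- iterate
    have prodN : ∀ t : ℕ, t ≤ k - 1 →
        B ^ t * (n - 1).choose (m - 1) ≤ A ^ t * (n - 1 - t).choose (m - 1) := by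
      intro t
      induction t with
      | zero => simp
      | succ t ih =>
        intro ht
        have ih' := ih (by omega)
        have hAle : A ≤ n - 1 - t := by omega
        have hst := stepN (n - 1 - t) hAle
        calc B ^ (t + 1) * (n - 1).choose (m - 1)
            = B * (B ^ t * (n - 1).choose (m - 1)) := by ring
          _ ≤ B * (A ^ t * (n - 1 - t).choose (m - 1)) := Nat.mul_le_mul_left B ih'
          _ = A ^ t * (B * (n - 1 - t).choose (m - 1)) := by ring
          _ ≤ A ^ t * (A * (n - 1 - t - 1).choose (m - 1)) := Nat.mul_le_mul_left _ hst
          _ = A ^ (t + 1) * (n - 1 - (t + 1)).choose (m - 1) := by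
              rw [show n - 1 - t - 1 = n - 1 - (t + 1) by omega]; ring
    have prodK := prodN (k - 1) le_rfl
    rw [show n - 1 - (k - 1) = n - k by omega] at prodK
    -- first step identity : n * C(n-1, m-1) = C(n,m) * m
    have hId : n * (n - 1).choose (m - 1) = n.choose m * m := by
      have h := Nat.add_one_mul_choose_eq (n - 1) (m - 1)
      rwa [show n - 1 + 1 = n by omega, show m - 1 + 1 = m by omega] at h
    -- main nat inequality
    have main : m * B ^ (k - 1) * n.choose m ≤ n * A ^ (k - 1) * (n - k).choose (m - 1) := by
      calc m * B ^ (k - 1) * n.choose m = n.choose m * m * B ^ (k - 1) := by ring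
        _ = n * (n - 1).choose (m - 1) * B ^ (k - 1) := by rw [hId]
        _ = n * (B ^ (k - 1) * (n - 1).choose (m - 1)) := by ring
        _ ≤ n * (A ^ (k - 1) * (n - k).choose (m - 1)) := Nat.mul_le_mul_left n prodK
        _ = n * A ^ (k - 1) * (n - k).choose (m - 1) := by ring
    have mainR : (m : ℝ) * (B:ℝ) ^ (k - 1) * (n.choose m : ℝ)
        ≤ (n:ℝ) * (A:ℝ) ^ (k - 1) * ((n - k).choose (m - 1) : ℝ) := by exact_mod_cast main
    have hDposR : (0:ℝ) < ((n - k).choose (m - 1) : ℝ) := by exact_mod_cast hDpos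
    rw [div_le_iff₀ hDposR]
    have hBR : (0:ℝ) < (B:ℝ) := by exact_mod_cast hBpos
    -- analytic bound : A^(k-1) ≤ exp 1 * B^(k-1)
    have hABexp : (A:ℝ) ^ (k - 1) ≤ Real.exp 1 * (B:ℝ) ^ (k - 1) := by
      have h1 : (A:ℝ) ≤ Real.exp (((m - 1 : ℕ):ℝ) / (B:ℝ)) * B := by
        have he := Real.add_one_le_exp (((m - 1 : ℕ):ℝ) / (B:ℝ))
        have hABr : (A:ℝ) = ((m - 1 : ℕ):ℝ) + (B:ℝ) := by
          have : A = (m - 1) + B := by omega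
          exact_mod_cast this
        rw [hABr]
        calc ((m - 1 : ℕ):ℝ) + (B:ℝ) = (((m - 1 : ℕ):ℝ) / B + 1) * B := by field_simp
          _ ≤ Real.exp (((m - 1 : ℕ):ℝ) / B) * B :=
              mul_le_mul_of_nonneg_right he (le_of_lt hBR)
      have h2 : (A:ℝ) ^ (k - 1) ≤ (Real.exp (((m - 1:ℕ):ℝ) / B)) ^ (k - 1) * (B:ℝ) ^ (k - 1) := by
        calc (A:ℝ) ^ (k - 1) ≤ (Real.exp (((m - 1:ℕ):ℝ) / B) * B) ^ (k - 1) :=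
              pow_le_pow_left₀ (by positivity) h1 _
          _ = (Real.exp (((m - 1:ℕ):ℝ) / B)) ^ (k - 1) * (B:ℝ) ^ (k - 1) := mul_pow _ _ _
      have hnum : ((k - 1 : ℕ):ℝ) * ((m - 1:ℕ):ℝ) ≤ (B:ℝ) := by
        have hNZ : ((k:ℤ) - 1) * ((m:ℤ) - 1) ≤ (B:ℤ) := by
          have hmkZ : (m:ℤ) * k ≤ n := by exact_mod_cast hmk
          have hBZ : (B:ℤ) = (n:ℤ) + 2 - k - m := by omega
          nlinarith
        have hk1 : ((k - 1 : ℕ):ℤ) = (k:ℤ) - 1 := by omega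
        have hm1' : ((m - 1 : ℕ):ℤ) = (m:ℤ) - 1 := by omega
        have : ((k - 1:ℕ):ℤ) * ((m - 1:ℕ):ℤ) ≤ (B:ℤ) := by rw [hk1, hm1']; exact hNZ
        exact_mod_cast this
      have h3 : (Real.exp (((m - 1:ℕ):ℝ) / B)) ^ (k - 1) ≤ Real.exp 1 := by
        rw [← Real.exp_nat_mul]
        apply Real.exp_le_exp.mpr
        have hone : (((k - 1:ℕ):ℝ) * ((m - 1:ℕ):ℝ)) / B ≤ 1 := by
          rw [div_le_one hBR]; exact hnum
        calc ((k - 1:ℕ):ℝ) * (((m - 1:ℕ):ℝ) / B)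
            = (((k - 1:ℕ):ℝ) * ((m - 1:ℕ):ℝ)) / B := by ring
          _ ≤ 1 := hone
      calc (A:ℝ) ^ (k - 1) ≤ (Real.exp (((m - 1:ℕ):ℝ) / B)) ^ (k - 1) * (B:ℝ) ^ (k - 1) := h2
        _ ≤ Real.exp 1 * (B:ℝ) ^ (k - 1) := mul_le_mul_of_nonneg_right h3 (by positivity)
    -- n ≤ 2 m k
    have hn2mk : (n:ℝ) ≤ 2 * (m:ℝ) * (k:ℝ) := by
      have hkmk : k ≤ m * k := by
        calc k = 1 * k := (one_mul k).symm
          _ ≤ m * k := Nat.mul_le_mul_right k hm1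
      have hN : n ≤ 2 * (m * k) := by omega
      have : (n:ℝ) ≤ 2 * ((m:ℝ) * (k:ℝ)) := by exact_mod_cast hN
      linarith
    have hmBpos : (0:ℝ) < (m:ℝ) * (B:ℝ) ^ (k - 1) := by
      have hmR : (0:ℝ) < (m:ℝ) := by exact_mod_cast (show 0 < m by omega)
      positivity
    have hfinal : (n:ℝ) * (A:ℝ) ^ (k - 1)
        ≤ 2 * Real.exp 1 * (k:ℝ) * ((m:ℝ) * (B:ℝ) ^ (k - 1)) := by
      calc (n:ℝ) * (A:ℝ) ^ (k - 1)
          ≤ (2 * (m:ℝ) * (k:ℝ)) * (Real.exp 1 * (B:ℝ) ^ (k - 1)) := by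
            apply mul_le_mul hn2mk hABexp (by positivity) (by positivity)
        _ = 2 * Real.exp 1 * (k:ℝ) * ((m:ℝ) * (B:ℝ) ^ (k - 1)) := by ring
    have h5 : (m:ℝ) * (B:ℝ) ^ (k - 1) * (n.choose m : ℝ)
        ≤ (m:ℝ) * (B:ℝ) ^ (k - 1) * (2 * Real.exp 1 * (k:ℝ) * ((n - k).choose (m - 1) : ℝ)) := by
      calc (m:ℝ) * (B:ℝ) ^ (k - 1) * (n.choose m : ℝ)
          ≤ (n:ℝ) * (A:ℝ) ^ (k - 1) * ((n - k).choose (m - 1) : ℝ) := mainR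
        _ ≤ (2 * Real.exp 1 * (k:ℝ) * ((m:ℝ) * (B:ℝ) ^ (k - 1))) * ((n - k).choose (m - 1) : ℝ) :=
            mul_le_mul_of_nonneg_right hfinal hDposR.le
        _ = (m:ℝ) * (B:ℝ) ^ (k - 1) * (2 * Real.exp 1 * (k:ℝ) * ((n - k).choose (m - 1) : ℝ)) := by
            ring
    exact le_of_mul_le_mul_left h5 hmBpos
end

section
/- Let E be a family of d-subsets (hyperedges) of [n], and let χ be a positive integer with d + χ ≤ n. For hyperedges e, e' ∈ E define S_{e,e',χ} to be the union of e with the χ smallest elements of e'\e if |e'\e| ≥ χ (padding with fixed dummy vertices n+1,...,n+χ otherwise). A binary t×n matrix M is an (E,χ,m)-selector if for any two distinct e, e' ∈ E, the submatrix of columns indexed by S_{e,e',χ} contains at least m distinct rows of the identity matrix I_{d+χ}. Then: if T is any cover of the hypergraph H_{d+χ-m+1} = (X, B_{d+χ-m+1}), where X is the set of binary vectors of length n (extended to n+χ coordinates for dummies) with exactly ⌊n/(d+χ)⌋ ones, and B_{d+χ-m+1} consists of all sets B_{A,e,e'} = ∪_{a∈A} {x ∈ X : the restriction of x to S_{e,e',χ}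 equals a} for A a (d+χ-m+1)-subset of the rows of I_{d+χ} and e ≠ e' ∈ E, then the matrix whose rows are the vectors of T is an (E,χ,m)-selector. -/
/-- The `k` smallest elements of a finset of `Fin N`. -/
def smallestK {N : ℕ} (s : Finset (Fin N)) (k : ℕ) : Finset (Fin N) :=
  ((s.sort (· ≤ ·)).take k).toFinset

/-- The set `S_{e,e',χ}`: the elements of `e` together with the `χ` smallest
elements of `u \ e` (where `u` plays the role of `e'`), padded with the smallest
dummy vertices (those with value `≥ n`) if `u \ e` has fewer than `χ` elements. -/
def Sset (n χ : ℕ) (e u : Finset (Fin (n + χ))) : Finset (Fin (n + χ)) :=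
  if χ ≤ (u \ e).card then e ∪ smallestK (u \ e) χ
  else e ∪ (u \ e) ∪
    smallestK (Finset.univ.filter fun v : Fin (n + χ) => n ≤ v.val) (χ - (u \ e).card)

lemma smallestK_subset {N : ℕ} (s : Finset (Fin N)) (k : ℕ) : smallestK s k ⊆ s := by
  intro v hv
  rw [smallestK, List.mem_toFinset] at hv
  exact (Finset.mem_sort (· ≤ ·)).mp (List.take_subset _ _ hv)

lemma smallestK_card {N : ℕ} (s : Finset (Fin N)) (k : ℕ) :
    (smallestK s k).card = min k s.card := by
  rw [smallestK, List.card_toFinset,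
    ((Finset.sort_nodup s (· ≤ ·)).sublist (List.take_sublist k _)).dedup,
    List.length_take, Finset.length_sort]

lemma card_Sset (n d χ : ℕ) (e u : Finset (Fin (n + χ))) (hed : e.card = d)
    (he : ∀ v ∈ e, v.val < n) (hu : ∀ v ∈ u, v.val < n) :
    (Sset n χ e u).card = d + χ := by
  have hdum : χ ≤ (Finset.univ.filter fun v : Fin (n + χ) => n ≤ v.val).card := by
    have : (Finset.univ : Finset (Fin χ)).card ≤
        (Finset.univ.filter fun v : Fin (n + χ) => n ≤ v.val).card := by
      apply Finset.card_le_card_of_injOn (fun i => ⟨n + i.val, by omega⟩)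
      · intro i _
        simp
      · intro i _ j _ h
        have : n + i.val = n + j.val := congrArg Fin.val h
        exact Fin.ext (by omega)
    simpa using this
  rw [Sset]
  split_ifs with h
  · rw [Finset.card_union_of_disjoint, hed, smallestK_card]
    · omega
    · exact Finset.disjoint_left.mpr fun v hv hv2 =>
        (Finset.mem_sdiff.mp (smallestK_subset _ _ hv2)).2 hv
  · have hd1 : Disjoint (e ∪ (u \ e))
        (smallestK (Finset.univ.filter fun v : Fin (n + χ) => n ≤ v.val)
          (χ - (u \ e).card)) := by
      apply Finset.disjoint_left.mpr
      intro v hv hv2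
      have hvn : n ≤ v.val := (Finset.mem_filter.mp (smallestK_subset _ _ hv2)).2
      rcases Finset.mem_union.mp hv with h1 | h1
      · exact absurd (he v h1) (by omega)
      · exact absurd (hu v (Finset.mem_sdiff.mp h1).1) (by omega)
    have hd2 : Disjoint e (u \ e) :=
      Finset.disjoint_left.mpr fun v hv hv2 => (Finset.mem_sdiff.mp hv2).2 hv
    rw [Finset.card_union_of_disjoint hd1, Finset.card_union_of_disjoint hd2,
      smallestK_card, hed]
    omega

/-- If `T` is a cover of the hypergraph `H_{d+χ-m+1} = (X, B_{d+χ-m+1})`, where `X` is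
the set of binary vectors of length `n+χ` with exactly `⌊n/(d+χ)⌋` ones and the
hyperedges `B_{A,e,e'}` consist of the vectors of `X` whose restriction to
`S_{e,e',χ}` is a standard basis vector with its `1` in a position of `A` (with
`A ⊆ S_{e,e',χ}` of size `d+χ-m+1`), then the matrix whose rows are the vectors of
`T` is an `(E,χ,m)`-selector. -/
theorem cover_is_selector (n d χ m : ℕ) (hd : 0 < d) (hχ : 0 < χ)
    (hm1 : 1 ≤ m) (hm2 : m ≤ d + χ) (hn : d + χ ≤ n)
    (E : Finset (Finset (Fin (n + χ))))
    (hEd : ∀ e ∈ E, e.card = d) (hEv : ∀ e ∈ E, ∀ v ∈ e, v.val < n)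
    (k : ℕ) (hk : k = n / (d + χ))
    (X : Finset (Fin (n + χ) → Bool))
    (hX : X = Finset.univ.filter fun x =>
      (Finset.univ.filter fun i => x i = true).card = k)
    (T : Finset (Fin (n + χ) → Bool)) (hTX : T ⊆ X)
    (hcover : ∀ e ∈ E, ∀ e' ∈ E, e ≠ e' →
      ∀ J ⊆ Sset n χ e e', J.card = d + χ - m + 1 →
        ∃ x ∈ T, ∃ j ∈ J, x j = true ∧
          ∀ j' ∈ Sset n χ e e', j' ≠ j → x j' = false) :
    ∀ e ∈ E, ∀ e' ∈ E, e ≠ e' →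
      ∃ J ⊆ Sset n χ e e', m ≤ J.card ∧
        ∀ j ∈ J, ∃ x ∈ T, x j = true ∧
          ∀ j' ∈ Sset n χ e e', j' ≠ j → x j' = false := by
  intro e he e' he' hne
  classical
  set S := Sset n χ e e' with hS
  set G := S.filter (fun j => ∃ x ∈ T, x j = true ∧
    ∀ j' ∈ S, j' ≠ j → x j' = false) with hG
  refine ⟨G, Finset.filter_subset _ _, ?_, ?_⟩
  · by_contra hcon
    push_neg at hcon
    have hScard : S.card = d + χ := card_Sset n d χ e e' (hEd e he) (hEv e he) (hEv e' he')
    have hsd : S.card - G.card ≤ (S \ G).card := Finset.le_card_sdiff _ _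
    have hGle : G.card ≤ S.card := Finset.card_le_card (Finset.filter_subset _ _)
    obtain ⟨J, hJsub, hJcard⟩ := Finset.exists_subset_card_eq (s := S \ G) (n := d + χ - m + 1)
      (by omega)
    obtain ⟨x, hx, j, hjJ, hxj, hrest⟩ := hcover e he e' he' hne J
      (hJsub.trans Finset.sdiff_subset) hJcard
    have hjS : j ∈ S := Finset.sdiff_subset (hJsub hjJ)
    have hjG : j ∈ G := Finset.mem_filter.mpr ⟨hjS, x, hx, hxj, hrest⟩
    exact (Finset.mem_sdiff.mp (hJsub hjJ)).2 hjG
  · intro j hj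
    obtain ⟨_, x, hx, h1, h2⟩ := Finset.mem_filter.mp hj
    exact ⟨x, hx, h1, h2⟩
end

section
/- Let E be a family of d-subsets of [n] and let p be a positive integer with p ≤ min{|e'\e| : e, e' ∈ E, e ≠ e'}. Then every (E,p,d+1)-selector is an E-separable code. -/
lemma columnOr_ne_of_row_isolates {R C : Type*} {M : R → C → Bool} {e e' : Finset C}
    {r : R} {j : C} (hje' : j ∈ e') (hrj : M r j = true) (hre : ∀ j' ∈ e, M r j' = false) :
    (fun i => ∃ j ∈ e, M i j = true) ≠ (fun i => ∃ j ∈ e', M i j = true) := by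
  intro hor
  obtain ⟨j', hj'e, hrj'⟩ := (congrFun hor r).mpr ⟨j, hje', hrj⟩
  simp [hre j' hj'e] at hrj'

theorem selector_is_separable_general (t n d p : ℕ)
    (M : Fin t → Fin n → Bool) (E : Finset (Finset (Fin n)))
    (hEd : ∀ e ∈ E, e.card = d)
    (hsel : ∀ e ∈ E, ∀ e' ∈ E, e ≠ e' →
      ∃ J ⊆ e ∪ smallestK (e' \ e) p, d + 1 ≤ J.card ∧
        ∀ j ∈ J, ∃ r : Fin t, M r j = true ∧
          ∀ j' ∈ e ∪ smallestK (e' \ e) p, j' ≠ j → M r j' = false) :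
    ∀ e ∈ E, ∀ e' ∈ E, e ≠ e' →
      (fun i : Fin t => ∃ j ∈ e, M i j = true) ≠
      (fun i : Fin t => ∃ j ∈ e', M i j = true) := by
  intro e he e' he' hne
  obtain ⟨J, hJS, hJcard, hJrows⟩ := hsel e he e' he' hne
  obtain ⟨j, hjJ, hje⟩ := Finset.exists_mem_notMem_of_card_lt_card (s := e) (t := J)
    (by rw [hEd e he]; omega)
  have hj : j ∈ e' \ e :=
    smallestK_subset _ _ ((Finset.mem_union.mp (hJS hjJ)).resolve_left hje)
  obtain ⟨r, hrj, hrS⟩ := hJrows j hjJ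
  exact columnOr_ne_of_row_isolates (Finset.mem_sdiff.mp hj).1 hrj fun j' hj'e =>
    hrS j' (Finset.mem_union_left _ hj'e) (ne_of_mem_of_not_mem hj'e hje)

/-- If `p ≤ min{|e'\e| : e ≠ e' ∈ E}`, then every `(E,p,d+1)`-selector is an
`E`-separable code.  Here `S_{e,e',p} = e ∪ {p smallest elements of e'\e}`, and the
selector property says that for distinct `e, e' ∈ E` the columns indexed by
`S_{e,e',p}` contain at least `d+1` distinct rows of the identity matrix. -/
theorem selector_is_separable (t n d p : ℕ) (hp : 0 < p)
    (M : Fin t → Fin n → Bool) (E : Finset (Finset (Fin n)))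
    (hEd : ∀ e ∈ E, e.card = d)
    (hmin : ∀ e ∈ E, ∀ e' ∈ E, e ≠ e' → p ≤ (e' \ e).card)
    (hsel : ∀ e ∈ E, ∀ e' ∈ E, e ≠ e' →
      ∃ J ⊆ e ∪ smallestK (e' \ e) p, d + 1 ≤ J.card ∧
        ∀ j ∈ J, ∃ r : Fin t, M r j = true ∧
          ∀ j' ∈ e ∪ smallestK (e' \ e) p, j' ≠ j → M r j' = false) :
    ∀ e ∈ E, ∀ e' ∈ E, e ≠ e' →
      (fun i : Fin t => ∃ j ∈ e, M i j = true) ≠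
      (fun i : Fin t => ∃ j ∈ e', M i j = true) :=
  selector_is_separable_general t n d p M E hEd hsel
end

section
/- Let E be a family of hyperedges on [n], each of size at most d, and let p ≤ d-1 be a positive integer. Then there exists a non-adaptive group testing algorithm using t = O((d/p)·log|E|) tests which, when the defective hyperedge is e* ∈ E, discards every hyperedge e ∈ E with |e\e*| ≥ p (that is, after the tests, every hyperedge e with |e\e*| ≥ p contains a vertex that belongs to a pool returning a negative response). -/
open Finset

lemma count_avoid (n d : ℕ) (z : Fin d) (A : Finset (Fin n)) :
    (Finset.univ.filter (fun f : Fin n → Fin d => ∀ j ∈ A, f j ≠ z)).card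
      = (d - 1) ^ A.card * d ^ (n - A.card) := by
  classical
  have h1 : (Finset.univ.filter (fun f : Fin n → Fin d => ∀ j ∈ A, f j ≠ z))
      = Fintype.piFinset (fun i => if i ∈ A then (Finset.univ.erase z) else Finset.univ) := by
    ext f
    simp only [Finset.mem_filter, Fintype.mem_piFinset, Finset.mem_univ, true_and]
    constructor
    · intro h i
      by_cases hi : i ∈ A <;> simp [hi, h]
    · intro h j hj
      have := h j
      simpa [hj] using this
  have h2 : ∀ i ∈ Finset.univ \ A, ((if i ∈ A then (Finset.univ.erase z) else (Finset.univ : Finset (Fin d))).card) = d := by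
    intro i hi
    simp only [Finset.mem_sdiff] at hi
    rw [if_neg hi.2]
    simp
  have h3 : ∀ i ∈ A, ((if i ∈ A then (Finset.univ.erase z) else (Finset.univ : Finset (Fin d))).card) = d - 1 := by
    intro i hi
    rw [if_pos hi, Finset.card_erase_of_mem (Finset.mem_univ z)]
    simp
  rw [h1, Fintype.card_piFinset, ← Finset.prod_sdiff (Finset.subset_univ A),
    Finset.prod_congr rfl h2, Finset.prod_congr rfl h3, Finset.prod_const, Finset.prod_const,
    Finset.card_sdiff_of_subset (Finset.subset_univ A), mul_comm]
  simp
lemma count_good (n d : ℕ) (z : Fin d) (A K : Finset (Fin n)) :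
    (Finset.univ.filter (fun f : Fin n → Fin d => (∀ j ∈ A, f j ≠ z) ∧ ∃ j ∈ K, f j = z)).card
      = (d - 1) ^ A.card * d ^ (n - A.card)
        - (d - 1) ^ (A ∪ K).card * d ^ (n - (A ∪ K).card) := by
  classical
  have hsub : (Finset.univ.filter (fun f : Fin n → Fin d => ∀ j ∈ A ∪ K, f j ≠ z))
      ⊆ (Finset.univ.filter (fun f : Fin n → Fin d => ∀ j ∈ A, f j ≠ z)) := by
    intro f hf
    simp only [Finset.mem_filter, Finset.mem_union] at *
    exact ⟨hf.1, fun j hj => hf.2 j (Or.inl hj)⟩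
  have heq : (Finset.univ.filter (fun f : Fin n → Fin d => (∀ j ∈ A, f j ≠ z) ∧ ∃ j ∈ K, f j = z))
      = (Finset.univ.filter (fun f : Fin n → Fin d => ∀ j ∈ A, f j ≠ z))
        \ (Finset.univ.filter (fun f : Fin n → Fin d => ∀ j ∈ A ∪ K, f j ≠ z)) := by
    ext f
    simp only [Finset.mem_sdiff, Finset.mem_filter, Finset.mem_univ, true_and,
      Finset.mem_union, not_forall]
    constructor
    · rintro ⟨hA, j, hj, hz⟩
      exact ⟨hA, ⟨j, Or.inr hj, by simpa using hz⟩⟩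
    · rintro ⟨hA, j, hj, hz⟩
      refine ⟨hA, j, ?_, by simpa using hz⟩
      rcases hj with hj | hj
      · exact absurd (by simpa using hz) (hA j hj)
      · exact hj
  rw [heq, Finset.card_sdiff_of_subset hsub, count_avoid, count_avoid]
lemma exp_neg_two_mul_le {y : ℝ} (h0 : 0 ≤ y) (h1 : y ≤ 1/2) :
    Real.exp (-(2*y)) ≤ 1 - y := by
  have h2 : 1 + 2*y ≤ Real.exp (2*y) := by
    have := Real.add_one_le_exp (2*y); linarith
  have h3 : 0 < 1 + 2*y := by linarith
  have h4 : Real.exp (-(2*y)) = 1 / Real.exp (2*y) := by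
    rw [Real.exp_neg]; ring
  rw [h4]
  rw [div_le_iff₀ (Real.exp_pos _)]
  nlinarith [Real.exp_pos (2*y)]

lemma exp_neg_le_affine {z : ℝ} (h0 : 0 ≤ z) (h1 : z ≤ 1) :
    Real.exp (-z) ≤ 1 - z + z * Real.exp (-1) := by
  have := convexOn_exp.2 (Set.mem_univ (0:ℝ)) (Set.mem_univ (-1:ℝ))
    (by linarith : (0:ℝ) ≤ 1 - z) h0 (by ring)
  simpa [Real.exp_zero, mul_comm] using this

lemma const_bound : (1/16 : ℝ) ≤ Real.exp (-2) * (1 - Real.exp (-1)) := by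
  have h1 : Real.exp 1 < 2.7182818286 := Real.exp_one_lt_d9
  have h2 : 2.7182818283 < Real.exp 1 := Real.exp_one_gt_d9
  have he : Real.exp (-1) = 1 / Real.exp 1 := by rw [Real.exp_neg]; ring
  have he2 : Real.exp (-2) = 1 / (Real.exp 1 * Real.exp 1) := by
    rw [Real.exp_neg, ← Real.exp_add]; norm_num
  rw [he, he2]
  have hp : (0:ℝ) < Real.exp 1 := Real.exp_pos 1
  rw [div_mul_eq_mul_div, le_div_iff₀ (by positivity)]
  have : 1 - 1 / Real.exp 1 = (Real.exp 1 - 1) / Real.exp 1 := by field_simp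
  rw [this]
  rw [one_mul, le_div_iff₀ hp]
  nlinarith [hp, mul_pos hp hp]
lemma key_bound (d s k p : ℕ) (hd : 2 ≤ d) (hs : s ≤ d) (hp : 0 < p) (hpk : p ≤ k)
    (hpd : p ≤ d) :
    (p : ℝ) / (16 * d) ≤ (1 - 1/d)^s * (1 - (1 - 1/d)^k) := by
  have hd0 : (0:ℝ) < d := by
    have : (2:ℝ) ≤ d := by exact_mod_cast hd
    linarith
  set x : ℝ := 1 - 1/d with hx
  have hx0 : 0 ≤ x := by
    have : 1/(d:ℝ) ≤ 1/2 := by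
      apply div_le_div_of_nonneg_left (by norm_num) (by norm_num)
      exact_mod_cast hd
    simp only [hx]; linarith
  have hx1 : x ≤ 1 := by
    have : 0 ≤ 1/(d:ℝ) := by positivity
    simp only [hx]; linarith
  have hhalf : 1/(d:ℝ) ≤ 1/2 := by
    apply div_le_div_of_nonneg_left (by norm_num) (by norm_num)
    exact_mod_cast hd
  -- x^s ≥ exp(-2)
  have h1 : Real.exp (-2) ≤ x ^ s := by
    have hxe : Real.exp (-(2 * (1/d))) ≤ x := exp_neg_two_mul_le (by positivity) hhalf
    have : Real.exp (-(2 * (1/d))) ^ d ≤ x ^ d := by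
      exact pow_le_pow_left₀ (Real.exp_pos _).le hxe d
    have heq : Real.exp (-(2 * (1/(d:ℝ)))) ^ d = Real.exp (-2) := by
      rw [← Real.exp_nat_mul]
      congr 1
      field_simp
    calc Real.exp (-2) = Real.exp (-(2 * (1/(d:ℝ)))) ^ d := heq.symm
      _ ≤ x ^ d := this
      _ ≤ x ^ s := pow_le_pow_of_le_one hx0 hx1 hs
  -- 1 - x^k ≥ (1 - exp(-1)) * (p/d)
  have h2 : (1 - Real.exp (-1)) * ((p:ℝ)/d) ≤ 1 - x ^ k := by
    have hxk : x ^ k ≤ x ^ p := pow_le_pow_of_le_one hx0 hx1 hpk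
    have hxp : x ^ p ≤ Real.exp (-(1/d)) ^ p := by
      apply pow_le_pow_left₀ hx0
      have := Real.add_one_le_exp (-(1/(d:ℝ)))
      linarith
    have hexp : Real.exp (-(1/(d:ℝ))) ^ p = Real.exp (-((p:ℝ)/d)) := by
      rw [← Real.exp_nat_mul]
      congr 1
      field_simp
    have hz0 : 0 ≤ (p:ℝ)/d := by positivity
    have hz1 : (p:ℝ)/d ≤ 1 := by
      rw [div_le_one hd0]; exact_mod_cast hpd
    have haff := exp_neg_le_affine hz0 hz1
    have : x ^ k ≤ 1 - (p:ℝ)/d + ((p:ℝ)/d) * Real.exp (-1) := by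
      calc x ^ k ≤ x ^ p := hxk
        _ ≤ Real.exp (-(1/(d:ℝ))) ^ p := hxp
        _ = Real.exp (-((p:ℝ)/d)) := hexp
        _ ≤ 1 - (p:ℝ)/d + ((p:ℝ)/d) * Real.exp (-1) := haff
    nlinarith
  have hxs0 : 0 ≤ x ^ s := pow_nonneg hx0 s
  have h2' : 0 ≤ 1 - x ^ k := by
    have he1 : Real.exp (-1) ≤ 1 := by
      rw [Real.exp_le_one_iff]; norm_num
    have : (0:ℝ) ≤ (1 - Real.exp (-1)) * ((p:ℝ)/d) :=
      mul_nonneg (by linarith) (by positivity)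
    linarith
  calc (p:ℝ) / (16 * d) = (1/16) * ((p:ℝ)/d) := by ring
    _ ≤ (Real.exp (-2) * (1 - Real.exp (-1))) * ((p:ℝ)/d) := by
        apply mul_le_mul_of_nonneg_right const_bound (by positivity)
    _ = Real.exp (-2) * ((1 - Real.exp (-1)) * ((p:ℝ)/d)) := by ring
    _ ≤ x ^ s * (1 - x ^ k) := by
        apply mul_le_mul h1 h2 ?_ hxs0
        have he1 : Real.exp (-1) ≤ 1 := by rw [Real.exp_le_one_iff]; norm_num
        exact mul_nonneg (by linarith) (by positivity)
-- casting helper: the good count as a real number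
lemma good_cast (n d : ℕ) (hd : 2 ≤ d) (z : Fin d) (A K : Finset (Fin n))
    (hAK : Disjoint A K) (hn : (A ∪ K).card ≤ n) :
    ((Finset.univ.filter (fun f : Fin n → Fin d =>
        (∀ j ∈ A, f j ≠ z) ∧ ∃ j ∈ K, f j = z)).card : ℝ)
      = (d:ℝ)^n * ((1 - 1/d)^A.card * (1 - (1 - 1/d)^K.card)) := by
  have hd0 : (0:ℝ) < d := by
    have : (2:ℝ) ≤ d := by exact_mod_cast hd
    linarith
  have hd1 : 1 ≤ d := by omega
  have hsub : (Finset.univ.filter (fun f : Fin n → Fin d => ∀ j ∈ A ∪ K, f j ≠ z))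
      ⊆ (Finset.univ.filter (fun f : Fin n → Fin d => ∀ j ∈ A, f j ≠ z)) := by
    intro f hf
    simp only [Finset.mem_filter, Finset.mem_union] at *
    exact ⟨hf.1, fun j hj => hf.2 j (Or.inl hj)⟩
  have hle : (d - 1) ^ (A ∪ K).card * d ^ (n - (A ∪ K).card)
      ≤ (d - 1) ^ A.card * d ^ (n - A.card) := by
    rw [← count_avoid, ← count_avoid]
    exact Finset.card_le_card hsub
  have hsA : A.card ≤ n := le_trans (Finset.card_le_card Finset.subset_union_left) hn
  have hcard : (A ∪ K).card = A.card + K.card := Finset.card_union_of_disjoint hAK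
  have cast_term : ∀ c : ℕ, c ≤ n →
      (((d - 1) ^ c * d ^ (n - c) : ℕ) : ℝ) = (d:ℝ)^n * (1 - 1/d)^c := by
    intro c hc
    have h1 : (1 - 1/(d:ℝ)) = ((d:ℝ) - 1) / d := by field_simp
    push_cast [hd1]
    rw [pow_sub₀ _ (ne_of_gt hd0) hc, h1, div_pow]
    field_simp
  rw [count_good, Nat.cast_sub hle, cast_term _ hsA, cast_term _ hn, hcard]
  rw [pow_add]
  ring
lemma bad_card_bound (n d t p : ℕ) (hd2 : 2 ≤ d) (hp : 0 < p) (hpd' : p ≤ d)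
    (z : Fin d) (γ : ℝ) (hγ : γ = (p:ℝ)/(16*(d:ℝ))) (A K : Finset (Fin n))
    (hA : A.card ≤ d) (hK : p ≤ K.card) (hAK : Disjoint A K) :
    ((Finset.univ.filter (fun ω : Fin t → Fin n → Fin d =>
        ∀ r, ¬ ((∀ j ∈ A, ω r j ≠ z) ∧ ∃ j ∈ K, ω r j = z))).card : ℝ)
      ≤ ((1 - γ) * (d:ℝ)^n) ^ t := by
  have hd0 : (0:ℝ) < d := by exact_mod_cast (by omega : 0 < d)
  have hγ0 : 0 < γ := by rw [hγ]; positivity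
  have hγ1 : γ ≤ 1 := by
    rw [hγ, div_le_one (by positivity)]
    have : (p:ℝ) ≤ d := by exact_mod_cast hpd'
    linarith
  set Fail : Finset (Fin n → Fin d) :=
    Finset.univ.filter (fun f => ¬ ((∀ j ∈ A, f j ≠ z) ∧ ∃ j ∈ K, f j = z)) with hFdef
  have hsubset : (Finset.univ.filter (fun ω : Fin t → Fin n → Fin d =>
        ∀ r, ¬ ((∀ j ∈ A, ω r j ≠ z) ∧ ∃ j ∈ K, ω r j = z)))
      ⊆ Fintype.piFinset (fun _ : Fin t => Fail) := by
    intro ω hω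
    simp only [Finset.mem_filter, Finset.mem_univ, true_and] at hω
    rw [Fintype.mem_piFinset]
    intro r
    simp only [hFdef, Finset.mem_filter, Finset.mem_univ, true_and]
    exact hω r
  have hcard1 : (Finset.univ.filter (fun ω : Fin t → Fin n → Fin d =>
        ∀ r, ¬ ((∀ j ∈ A, ω r j ≠ z) ∧ ∃ j ∈ K, ω r j = z))).card ≤ Fail.card ^ t := by
    calc _ ≤ (Fintype.piFinset (fun _ : Fin t => Fail)).card := Finset.card_le_card hsubset
      _ = Fail.card ^ t := by rw [Fintype.card_piFinset]; simp
  have hunion : (A ∪ K).card ≤ n := by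
    calc (A ∪ K).card ≤ Fintype.card (Fin n) := Finset.card_le_univ _
      _ = n := Fintype.card_fin n
  have hG := good_cast n d hd2 z A K hAK hunion
  have hkey := key_bound d A.card K.card p hd2 hA hp hK hpd'
  have hFeq : Fail.card = d ^ n - (Finset.univ.filter (fun f : Fin n → Fin d =>
      (∀ j ∈ A, f j ≠ z) ∧ ∃ j ∈ K, f j = z)).card := by
    rw [hFdef, Finset.filter_not, Finset.card_sdiff_of_subset (Finset.filter_subset _ _)]
    congr 1
    simp [Fintype.card_fun]
  have hGle : (Finset.univ.filter (fun f : Fin n → Fin d =>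
      (∀ j ∈ A, f j ≠ z) ∧ ∃ j ∈ K, f j = z)).card ≤ d ^ n := by
    calc _ ≤ (Finset.univ : Finset (Fin n → Fin d)).card := Finset.card_le_card (Finset.filter_subset _ _)
      _ = d ^ n := by simp [Fintype.card_fun]
  have hFreal : (Fail.card : ℝ) ≤ (1 - γ) * (d:ℝ)^n := by
    rw [hFeq, Nat.cast_sub hGle, hG]
    have hdn : (0:ℝ) ≤ (d:ℝ)^n := by positivity
    have h5 : γ * (d:ℝ)^n ≤ (d:ℝ)^n * ((1 - 1/(d:ℝ))^A.card * (1 - (1 - 1/(d:ℝ))^K.card)) := by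
      rw [mul_comm γ _]
      apply mul_le_mul_of_nonneg_left _ hdn
      rw [hγ] at *
      exact hkey
    push_cast
    nlinarith
  have hF0 : (0:ℝ) ≤ (Fail.card : ℝ) := by positivity
  calc ((Finset.univ.filter (fun ω : Fin t → Fin n → Fin d =>
        ∀ r, ¬ ((∀ j ∈ A, ω r j ≠ z) ∧ ∃ j ∈ K, ω r j = z))).card : ℝ)
      ≤ ((Fail.card : ℝ)) ^ t := by exact_mod_cast hcard1
    _ ≤ ((1 - γ) * (d:ℝ)^n) ^ t := pow_le_pow_left₀ hF0 hFreal t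
lemma exists_omega (n d t : ℕ) (hd2 : 2 ≤ d) (z : Fin d)
    (P : Finset (Finset (Fin n) × Finset (Fin n))) (β : ℝ) (hβ0 : 0 ≤ β)
    (hbound : ∀ q ∈ P, ((Finset.univ.filter (fun ω : Fin t → Fin n → Fin d =>
        ∀ r, ¬ ((∀ j ∈ q.1, ω r j ≠ z) ∧ ∃ j ∈ q.2 \ q.1, ω r j = z))).card : ℝ)
        ≤ (β * (d:ℝ)^n) ^ t)
    (hsmall : (P.card : ℝ) * β ^ t < 1) :
    ∃ ω : Fin t → Fin n → Fin d, ∀ q ∈ P,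
      ∃ r, (∀ j ∈ q.1, ω r j ≠ z) ∧ ∃ j ∈ q.2 \ q.1, ω r j = z := by
  classical
  by_contra hcon
  push_neg at hcon
  have hcover : (Finset.univ : Finset (Fin t → Fin n → Fin d)) ⊆
      P.biUnion (fun q => Finset.univ.filter (fun ω : Fin t → Fin n → Fin d =>
        ∀ r, ¬ ((∀ j ∈ q.1, ω r j ≠ z) ∧ ∃ j ∈ q.2 \ q.1, ω r j = z))) := by
    intro ω _
    rw [Finset.mem_biUnion]
    obtain ⟨q, hq, hbad⟩ := hcon ω
    refine ⟨q, hq, ?_⟩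
    simp only [Finset.mem_filter, Finset.mem_univ, true_and]
    rintro r ⟨h1, j, hj, hz⟩
    exact hbad r h1 j hj hz
  have hd0 : (0:ℝ) < d := by exact_mod_cast (by omega : 0 < d)
  have h1 : (Finset.univ : Finset (Fin t → Fin n → Fin d)).card
      ≤ ∑ q ∈ P, (Finset.univ.filter (fun ω : Fin t → Fin n → Fin d =>
        ∀ r, ¬ ((∀ j ∈ q.1, ω r j ≠ z) ∧ ∃ j ∈ q.2 \ q.1, ω r j = z))).card :=
    le_trans (Finset.card_le_card hcover) (Finset.card_biUnion_le)
  have h2 : ((Finset.univ : Finset (Fin t → Fin n → Fin d)).card : ℝ) = ((d:ℝ)^n)^t := by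
    simp only [Finset.card_univ, Fintype.card_fun, Fintype.card_fin]
    push_cast
    rfl
  have h3 : ((d:ℝ)^n)^t ≤ (P.card : ℝ) * (β * (d:ℝ)^n) ^ t := by
    calc ((d:ℝ)^n)^t = ((Finset.univ : Finset (Fin t → Fin n → Fin d)).card : ℝ) := h2.symm
      _ ≤ ∑ q ∈ P, (((Finset.univ.filter (fun ω : Fin t → Fin n → Fin d =>
          ∀ r, ¬ ((∀ j ∈ q.1, ω r j ≠ z) ∧ ∃ j ∈ q.2 \ q.1, ω r j = z))).card : ℝ)) := by
          exact_mod_cast h1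
      _ ≤ ∑ _q ∈ P, (β * (d:ℝ)^n) ^ t := Finset.sum_le_sum hbound
      _ = (P.card : ℝ) * (β * (d:ℝ)^n) ^ t := by rw [Finset.sum_const, nsmul_eq_mul]
  have hdn0 : (0:ℝ) < ((d:ℝ)^n)^t := by positivity
  have : ((d:ℝ)^n)^t < ((d:ℝ)^n)^t := by
    calc ((d:ℝ)^n)^t ≤ (P.card : ℝ) * (β * (d:ℝ)^n) ^ t := h3
      _ = (P.card : ℝ) * β^t * ((d:ℝ)^n)^t := by rw [mul_pow]; ring
      _ < 1 * ((d:ℝ)^n)^t := mul_lt_mul_of_pos_right hsmall hdn0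
      _ = ((d:ℝ)^n)^t := by ring
  exact lt_irrefl _ this

lemma small_bound (γ L : ℝ) (t m : ℕ) (hγ0 : 0 < γ) (hγ1 : γ ≤ 1) (hm : 2 ≤ m)
    (hL : L = Real.log m) (ht : 2 * L < γ * t) :
    (m : ℝ)^2 * (1 - γ) ^ t < 1 := by
  have hm0 : (0:ℝ) < m := by
    have : (2:ℝ) ≤ m := by exact_mod_cast hm
    linarith
  have hexp : (1 - γ) ^ t ≤ Real.exp (-γ) ^ t := by
    apply pow_le_pow_left₀ (by linarith) _ t
    have := Real.add_one_le_exp (-γ)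
    linarith
  have hfinal : (m:ℝ)^2 * Real.exp (-γ) ^ t < 1 := by
    rw [← Real.exp_nat_mul]
    have h4 : Real.exp ((t:ℝ) * (-γ)) < Real.exp (-(2*L)) := by
      apply Real.exp_lt_exp.mpr
      nlinarith
    have hexpL : Real.exp (-(2*L)) = ((m:ℝ)^2)⁻¹ := by
      rw [hL, show -(2*Real.log (m:ℝ)) = -(Real.log ((m:ℝ)^2)) by rw [Real.log_pow]; push_cast; ring,
        Real.exp_neg, Real.exp_log (by positivity)]
    calc (m:ℝ)^2 * Real.exp ((t:ℝ) * (-γ)) < (m:ℝ)^2 * Real.exp (-(2*L)) := by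
          apply mul_lt_mul_of_pos_left h4 (by positivity)
      _ = 1 := by rw [hexpL]; field_simp
  calc (m:ℝ)^2 * (1 - γ) ^ t ≤ (m:ℝ)^2 * Real.exp (-γ) ^ t := by
        apply mul_le_mul_of_nonneg_left hexp (by positivity)
    _ < 1 := hfinal

/-- For any family `E` of hyperedges on `[n]` of size at most `d` and any positive
`p ≤ d-1`, there is a non-adaptive group testing algorithm with
`O((d/p)·log|E|)` tests which, when the defective hyperedge is `e* ∈ E`, discards
every `e ∈ E` with `|e \ e*| ≥ p`: some vertex of `e` lies in a pool that tests
negative (a row `r` with `M[r,j] = 0` for all `j ∈ e*`). -/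
theorem nonadaptive_discarding_exists :
    ∃ C : ℝ, 0 < C ∧ ∀ (n d p : ℕ), 0 < p → p ≤ d - 1 →
      ∀ E : Finset (Finset (Fin n)), (∀ e ∈ E, e.card ≤ d) →
        ∃ (t : ℕ) (M : Fin t → Fin n → Bool),
          (t : ℝ) ≤ C * ((d : ℝ) / p) * Real.log E.card ∧
          ∀ estar ∈ E, ∀ e ∈ E, p ≤ (e \ estar).card →
            ∃ r : Fin t, (∀ j ∈ estar, M r j = false) ∧ ∃ j ∈ e, M r j = true := by
  refine ⟨100, by norm_num, fun n d p hp hpd E hE => ?_⟩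
  have hd2 : 2 ≤ d := by omega
  have hpd' : p ≤ d := by omega
  have hd0 : (0:ℝ) < d := by exact_mod_cast (by omega : 0 < d)
  have hp0 : (0:ℝ) < p := by exact_mod_cast hp
  have hdp1 : (1:ℝ) ≤ (d:ℝ)/p := by
    rw [le_div_iff₀ hp0]
    norm_num
    exact_mod_cast hpd'
  by_cases hm : E.card ≤ 1
  · refine ⟨0, fun _ _ => false, ?_, ?_⟩
    · have hL : 0 ≤ Real.log E.card := Real.log_natCast_nonneg _
      push_cast
      positivity
    · intro estar hs e he hpe
      exfalso
      have heq : e = estar := Finset.card_le_one.mp hm e he estar hs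
      rw [heq] at hpe
      simp at hpe
      omega
  push_neg at hm
  have hm2 : 2 ≤ E.card := hm
  have hL2 : Real.log 2 ≤ Real.log E.card := by
    apply Real.log_le_log (by norm_num)
    exact_mod_cast hm2
  have hlog2 : (0.6931471803 : ℝ) < Real.log 2 := Real.log_two_gt_d9
  have hL0 : (0:ℝ) < Real.log E.card := by linarith
  set L : ℝ := Real.log E.card with hLdef
  set x : ℝ := 32 * ((d:ℝ)/p) * L with hxdef
  have hx1 : (1:ℝ) ≤ x := by
    have h9 : (32:ℝ) * 1 * 0.6931471803 ≤ 32 * ((d:ℝ)/p) * L := by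
      apply mul_le_mul
      · apply mul_le_mul_of_nonneg_left hdp1; norm_num
      · linarith
      · norm_num
      · positivity
    linarith
  have hx0 : (0:ℝ) ≤ x := by linarith
  set t : ℕ := ⌊x⌋₊ + 1 with htdef
  have hz0 : 0 < d := by omega
  set z : Fin d := ⟨0, hz0⟩ with hzdef
  set γ : ℝ := (p:ℝ) / (16 * (d:ℝ)) with hγdef
  have hγ0 : 0 < γ := by rw [hγdef]; positivity
  have hγ1 : γ ≤ 1 := by
    rw [hγdef, div_le_one (by positivity)]
    have h8 : (p:ℝ) ≤ d := by exact_mod_cast hpd'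
    linarith
  have hγt : 2 * L < γ * t := by
    have hxt : x < t := by
      rw [htdef]; push_cast
      exact Nat.lt_floor_add_one x
    have hγx : γ * x = 2 * L := by
      rw [hγdef, hxdef]
      field_simp
      ring
    calc 2 * L = γ * x := hγx.symm
      _ < γ * t := by exact mul_lt_mul_of_pos_left hxt hγ0
  set P := (E ×ˢ E).filter (fun q => p ≤ (q.2 \ q.1).card) with hPdef
  have hbound : ∀ q ∈ P, ((Finset.univ.filter (fun ω : Fin t → Fin n → Fin d =>
      ∀ r, ¬ ((∀ j ∈ q.1, ω r j ≠ z) ∧ ∃ j ∈ q.2 \ q.1, ω r j = z))).card : ℝ)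
      ≤ ((1 - γ) * (d:ℝ)^n) ^ t := by
    intro q hq
    rw [hPdef, Finset.mem_filter, Finset.mem_product] at hq
    exact bad_card_bound n d t p hd2 hp hpd' z γ hγdef q.1 (q.2 \ q.1)
      (hE q.1 hq.1.1) hq.2 Finset.disjoint_sdiff
  have hsmall : ((P.card : ℝ)) * (1 - γ) ^ t < 1 := by
    have hPle : (P.card : ℝ) ≤ (E.card:ℝ)^2 := by
      have h6 : P.card ≤ (E ×ˢ E).card := Finset.card_le_card (Finset.filter_subset _ _)
      have h7 : (E ×ˢ E).card = E.card * E.card := Finset.card_product _ _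
      have h8 : P.card ≤ E.card * E.card := by omega
      calc (P.card : ℝ) ≤ ((E.card * E.card : ℕ) : ℝ) := by exact_mod_cast h8
        _ = (E.card:ℝ)^2 := by push_cast; ring
    have hpos : (0:ℝ) ≤ (1 - γ)^t := pow_nonneg (by linarith) t
    calc (P.card : ℝ) * (1 - γ) ^ t ≤ (E.card:ℝ)^2 * (1 - γ) ^ t :=
          mul_le_mul_of_nonneg_right hPle hpos
      _ < 1 := small_bound γ L t E.card hγ0 hγ1 hm2 hLdef hγt
  obtain ⟨ω, hω⟩ := exists_omega n d t hd2 z P (1 - γ) (by linarith) hbound hsmall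
  refine ⟨t, fun r j => decide (ω r j = z), ?_, ?_⟩
  · have ht : (t:ℝ) ≤ x + 1 := by
      rw [htdef]; push_cast
      have := Nat.floor_le hx0
      linarith
    have h5 : x + 1 ≤ 100 * ((d:ℝ)/p) * L := by
      rw [hxdef]
      nlinarith [hx1, hdp1, hL0]
    linarith
  · intro estar hs e he hpe
    have hq : (estar, e) ∈ P := by
      rw [hPdef, Finset.mem_filter, Finset.mem_product]
      exact ⟨⟨hs, he⟩, hpe⟩
    obtain ⟨r, hA, j, hj, hzz⟩ := hω (estar, e) hq
    refine ⟨r, fun j' hj' => ?_, j, (Finset.mem_sdiff.mp hj).1, ?_⟩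
    · simp only [decide_eq_false_iff_not]
      exact hA j' hj'
    · simp only [decide_eq_true_eq]
      exact hzz
end

section
/- Let E be a family of hyperedges on [n], each of size at most d, and suppose p ≤ min{|e'\e| : e, e' ∈ E, e ≠ e'}. Then there exists a non-adaptive group testing algorithm that identifies the defective hyperedge in E using O((d/p)·log|E|) tests. -/
open Finset

def rowsAvoid (n m : ℕ) [NeZero m] (S : Finset (Fin n)) : Finset (Fin n → Fin m) :=
  Fintype.piFinset (fun j => if j ∈ S then ({0}ᶜ : Finset (Fin m)) else univ)

lemma mem_rowsAvoid {n m : ℕ} [NeZero m] {S : Finset (Fin n)} {r : Fin n → Fin m} :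
    r ∈ rowsAvoid n m S ↔ ∀ j ∈ S, r j ≠ 0 := by
  simp only [rowsAvoid, Fintype.mem_piFinset]
  apply forall_congr'
  intro j
  by_cases hj : j ∈ S <;> simp [hj]

lemma card_rowsAvoid {n m : ℕ} [NeZero m] (S : Finset (Fin n)) :
    (rowsAvoid n m S).card = (m-1)^S.card * m^(n - S.card) := by
  rw [rowsAvoid, Fintype.card_piFinset]
  have h : ∀ j : Fin n, ((if j ∈ S then ({0}ᶜ : Finset (Fin m)) else univ)).card
      = if j ∈ S then m - 1 else m := by
    intro j
    by_cases hj : j ∈ S <;> simp [hj, Finset.card_compl]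
  rw [Finset.prod_congr rfl (fun j _ => h j), Finset.prod_ite, Finset.prod_const,
    Finset.prod_const, Finset.filter_univ_mem]
  congr 1
  have hc : (filter (fun x => x ∉ S) univ) = Sᶜ := by ext j; simp
  rw [hc, Finset.card_compl, Fintype.card_fin]

/-- the nonseparating rows for a pair -/
def nsRows (n m : ℕ) [NeZero m] (e e' : Finset (Fin n)) : Finset (Fin n → Fin m) :=
  univ.filter (fun r => (∃ j ∈ e, r j = 0) ↔ (∃ j ∈ e', r j = 0))

set_option maxHeartbeats 1000000 in
lemma pair_bound {n m d p : ℕ} [NeZero m] (hm : m = 2*d) (hp : 1 ≤ p) (hpd : p ≤ d)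
    (e e' : Finset (Fin n)) (ha : e.card ≤ d) (hb : p ≤ (e' \ e).card) :
    ((nsRows n m e e').card : ℝ) ≤ (1 - (p:ℝ)/(8*d)) * (m:ℝ)^n := by
  classical
  set a := e.card with ha'
  set b := (e' \ e).card with hb'
  set u := e ∪ e' with hu
  have hcu : u.card = a + b := by
    rw [hu, Finset.union_comm, ← Finset.card_sdiff_add_card e' e]
    omega
  have han : a ≤ n := by
    calc a ≤ Fintype.card (Fin n) := Finset.card_le_univ e
    _ = n := Fintype.card_fin n
  have hcn : a + b ≤ n := by
    rw [← hcu]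
    calc u.card ≤ Fintype.card (Fin n) := Finset.card_le_univ u
    _ = n := Fintype.card_fin n
  have hsub : rowsAvoid n m u ⊆ rowsAvoid n m e := by
    intro r hr
    rw [mem_rowsAvoid] at hr ⊢
    exact fun j hj => hr j (Finset.mem_union_left _ hj)
  have hdisj : Disjoint (nsRows n m e e') (rowsAvoid n m e \ rowsAvoid n m u) := by
    rw [Finset.disjoint_right]
    intro r hr hns
    rw [Finset.mem_sdiff, mem_rowsAvoid, mem_rowsAvoid] at hr
    obtain ⟨h1, h2⟩ := hr
    push_neg at h2
    obtain ⟨j, hj, hj0⟩ := h2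
    have hje' : j ∈ e' := by
      rcases Finset.mem_union.mp hj with h | h
      · exact absurd hj0 (by simpa using h1 j h)
      · exact h
    rw [nsRows, Finset.mem_filter] at hns
    have := hns.2.mpr ⟨j, hje', by simpa using hj0⟩
    obtain ⟨j', hj', hj'0⟩ := this
    exact h1 j' hj' hj'0
  have hnat : (nsRows n m e e').card + ((rowsAvoid n m e).card - (rowsAvoid n m u).card)
      ≤ m^n := by
    rw [← Finset.card_sdiff_of_subset hsub, ← Finset.card_union_of_disjoint hdisj]
    calc _ ≤ (univ : Finset (Fin n → Fin m)).card := Finset.card_le_univ _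
    _ = m^n := by simp [Fintype.card_fun]
  have hYX : (rowsAvoid n m u).card ≤ (rowsAvoid n m e).card := Finset.card_le_card hsub
  have hnat2 : (nsRows n m e e').card + (rowsAvoid n m e).card
      ≤ m^n + (rowsAvoid n m u).card := by omega
  have hreal : ((nsRows n m e e').card : ℝ) + ((rowsAvoid n m e).card : ℝ)
      ≤ (m:ℝ)^n + ((rowsAvoid n m u).card : ℝ) := by exact_mod_cast hnat2
  -- real analysis
  have hd1 : 1 ≤ d := le_trans hp hpd
  set M : ℝ := (m:ℝ) with hM'
  have hM : M = 2*(d:ℝ) := by rw [hM', hm]; push_cast; ring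
  have hd0 : (0:ℝ) < d := by exact_mod_cast hd1
  have hp0 : (0:ℝ) < p := by exact_mod_cast hp
  have hpd' : (p:ℝ) ≤ d := by exact_mod_cast hpd
  have hM0 : (0:ℝ) < M := by rw [hM]; linarith
  have hd0' : (1:ℝ) ≤ d := by exact_mod_cast hd1
  have hM2 : (2:ℝ) ≤ M := by rw [hM]; linarith
  have hm1 : 1 ≤ m := by omega
  have hA : ((m-1:ℕ):ℝ) = M - 1 := by push_cast [Nat.cast_sub hm1]; ring
  set α : ℝ := (M-1)/M with hα
  have hα0 : 0 ≤ α := by rw [hα]; apply div_nonneg <;> linarith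
  have hα1 : α ≤ 1 := by rw [hα, div_le_one hM0]; linarith
  -- card identities in ℝ
  have hXcard : ((rowsAvoid n m e).card : ℝ) = α^a * M^n := by
    rw [card_rowsAvoid]
    push_cast [hA]
    rw [hα, div_pow, pow_sub₀ M hM0.ne' han]
    field_simp
    rfl
  have hYcard : ((rowsAvoid n m u).card : ℝ) = α^(a+b) * M^n := by
    rw [card_rowsAvoid, hcu]
    push_cast [hA]
    rw [hα, div_pow, pow_sub₀ M hM0.ne' hcn]
    field_simp
  -- α^a ≥ 1/2
  have hhalf : (1:ℝ)/2 ≤ α^a := by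
    have hber : 1 + (d:ℝ) * (-(1/M)) ≤ (1 + (-(1/M)))^d := by
      apply one_add_mul_le_pow
      have : (1:ℝ)/M ≤ 1 := by rw [div_le_one hM0]; linarith
      linarith
    have h1 : (1:ℝ) + (-(1/M)) = α := by rw [hα]; field_simp; ring
    have h2 : 1 + (d:ℝ) * (-(1/M)) = 1/2 := by rw [hM]; field_simp; ring
    have h3 : α^d ≤ α^a := pow_le_pow_of_le_one hα0 hα1 ha
    rw [h1, h2] at hber
    linarith
  -- α^b ≤ 1 - p/(2M)
  have hbbound : α^b ≤ 1 - (p:ℝ)/(2*M) := by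
    have h3 : α^b ≤ α^p := pow_le_pow_of_le_one hα0 hα1 hb
    have h4 : α ≤ Real.exp (-(1/M)) := by
      have := Real.add_one_le_exp (-(1/M))
      have h1 : (1:ℝ) + (-(1/M)) = α := by rw [hα]; field_simp; ring
      linarith
    have h5 : α^p ≤ Real.exp (-(1/M))^p := pow_le_pow_left₀ hα0 h4 p
    have h6 : Real.exp (-(1/M))^p = Real.exp (-((p:ℝ)/M)) := by
      rw [← Real.exp_nat_mul]
      congr 1
      field_simp
    have hx0 : (0:ℝ) < (p:ℝ)/M := by positivity
    have hx1 : (p:ℝ)/M ≤ 1 := by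
      rw [div_le_one hM0, hM]; linarith
    have h7 : Real.exp (-((p:ℝ)/M)) ≤ 1/(1 + (p:ℝ)/M) := by
      rw [Real.exp_neg]
      rw [one_div]
      apply inv_anti₀ (by linarith)
      have := Real.add_one_le_exp ((p:ℝ)/M)
      linarith
    have h8 : 1/(1 + (p:ℝ)/M) ≤ 1 - (p:ℝ)/(2*M) := by
      set x : ℝ := (p:ℝ)/M with hxdef
      have hx2 : (p:ℝ)/(2*M) = x/2 := by rw [hxdef]; ring
      rw [hx2, div_le_iff₀ (by linarith)]
      nlinarith [mul_nonneg hx0.le (sub_nonneg.mpr hx1)]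
    calc α^b ≤ α^p := h3
    _ ≤ Real.exp (-((p:ℝ)/M)) := by rw [← h6]; exact h5
    _ ≤ 1/(1 + (p:ℝ)/M) := h7
    _ ≤ 1 - (p:ℝ)/(2*M) := h8
  -- combine
  have hMn : (0:ℝ) < M^n := by positivity
  have hαa1 : α^a ≤ 1 := pow_le_one₀ hα0 hα1
  have hkey : (p:ℝ)/(8*d) * M^n ≤ α^a * M^n - α^(a+b) * M^n := by
    have : α^(a+b) = α^a * α^b := pow_add α a b
    rw [this]
    have hq : (p:ℝ)/(2*M) = (p:ℝ)/(4*d) := by rw [hM]; ring_nf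
    rw [hq] at hbbound
    have h1 : (p:ℝ)/(8*d) ≤ α^a * (1 - α^b) := by
      have hb0 : 0 ≤ 1 - α^b := by
        have : α^b ≤ 1 := pow_le_one₀ hα0 hα1
        linarith
      calc (p:ℝ)/(8*d) = (1/2) * ((p:ℝ)/(4*d)) := by ring
      _ ≤ α^a * (1 - α^b) := by
          apply mul_le_mul hhalf (by linarith) (div_nonneg hp0.le (by linarith)) (by linarith)
    have h2 := mul_le_mul_of_nonneg_right h1 hMn.le
    nlinarith [h2]
  rw [hXcard, hYcard] at hreal
  have hfin : (1 - (p:ℝ)/(8*d)) * (m:ℝ)^n = M^n - (p:ℝ)/(8*d) * M^n := by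
    rw [hM']; ring
  rw [hfin]
  linarith

set_option maxHeartbeats 1000000 in
/-- If `p ≤ min{|e'\e| : e ≠ e' ∈ E}` for a family `E` of hyperedges on `[n]` of
size at most `d`, then there is a non-adaptive group testing algorithm identifying
the defective hyperedge (distinct hyperedges give distinct response vectors) with
`O((d/p)·log|E|)` tests. -/
theorem nonadaptive_identification_exists :
    ∃ C : ℝ, 0 < C ∧ ∀ (n d p : ℕ), 0 < p →
      ∀ E : Finset (Finset (Fin n)), (∀ e ∈ E, e.card ≤ d) →
        (∀ e ∈ E, ∀ e' ∈ E, e ≠ e' → p ≤ (e' \ e).card) →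
        ∃ (t : ℕ) (M : Fin t → Fin n → Bool),
          (t : ℝ) ≤ C * ((d : ℝ) / p) * Real.log E.card ∧
          ∀ e ∈ E, ∀ e' ∈ E, e ≠ e' →
            (fun i : Fin t => ∃ j ∈ e, M i j = true) ≠
            (fun i : Fin t => ∃ j ∈ e', M i j = true) := by
  classical
  refine ⟨18, by norm_num, ?_⟩
  intro n d p hp E hcard hsep
  by_cases hE : E.card ≤ 1
  · refine ⟨0, fun _ _ => false, ?_, ?_⟩
    · have hlog : 0 ≤ Real.log (E.card : ℝ) := by
        rcases Nat.le_one_iff_eq_zero_or_eq_one.mp hE with h | h <;> simp [h]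
      have hdp : (0:ℝ) ≤ (d:ℝ)/p := by positivity
      push_cast
      nlinarith
    · intro e he e' he' hne
      exact absurd (Finset.card_le_one.mp hE e he e' he') hne
  · push_neg at hE
    have hN2 : 2 ≤ E.card := hE
    obtain ⟨e0, he0, e1, he1, hne01⟩ := Finset.one_lt_card.mp hE
    have hpd : p ≤ d := by
      calc p ≤ (e1 \ e0).card := hsep e0 he0 e1 he1 hne01
      _ ≤ e1.card := Finset.card_le_card (Finset.sdiff_subset)
      _ ≤ d := hcard e1 he1
    have hd1 : 1 ≤ d := le_trans hp hpd
    set m := 2*d with hm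
    haveI : NeZero m := ⟨by omega⟩
    have hp0 : (0:ℝ) < p := by exact_mod_cast hp
    have hd0 : (0:ℝ) < d := by exact_mod_cast hd1
    have hpd' : (p:ℝ) ≤ d := by exact_mod_cast hpd
    set L := Real.log (E.card : ℝ) with hLdef
    have hL2 : Real.log 2 ≤ L := by
      apply Real.log_le_log (by norm_num)
      exact_mod_cast hN2
    have hlog2 : (0.6931471803:ℝ) < Real.log 2 := Real.log_two_gt_d9
    have hL0 : 0 < L := lt_of_lt_of_le (by linarith) hL2
    set x : ℝ := 16 * ((d:ℝ)/p) * L with hxdef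
    have hx0 : 0 ≤ x := by positivity
    set t : ℕ := ⌊x⌋₊ + 1 with htdef
    have htx : 16 * ((d:ℝ)/p) * L < t := by
      rw [htdef]
      push_cast
      rw [← hxdef]
      exact Nat.lt_floor_add_one x
    have hdp1 : (1:ℝ) ≤ (d:ℝ)/p := by
      rw [le_div_iff₀ hp0]
      linarith
    have htle : (t:ℝ) ≤ 18 * ((d:ℝ)/p) * L := by
      have h1 : (⌊x⌋₊:ℝ) ≤ 16 * ((d:ℝ)/p) * L := by
        rw [← hxdef]; exact Nat.floor_le hx0
      have h2 : (1:ℝ) ≤ 2 * ((d:ℝ)/p) * L := by nlinarith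
      rw [htdef]
      push_cast
      linarith
    -- main combinatorial claim
    have main : ∃ ω : Fin t → Fin n → Fin m, ∀ e ∈ E, ∀ e' ∈ E, e ≠ e' →
        ¬ (∀ i, ((∃ j ∈ e, ω i j = 0) ↔ (∃ j ∈ e', ω i j = 0))) := by
      by_contra hcon
      push_neg at hcon
      have hcov : (univ : Finset (Fin t → Fin n → Fin m)) ⊆
          ((E ×ˢ E).filter (fun q => q.1 ≠ q.2)).biUnion
            (fun q => Fintype.piFinset (fun _ : Fin t => nsRows n m q.1 q.2)) := by
        intro ω _
        obtain ⟨e, he, e', he', hne, hiff⟩ := hcon ω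
        rw [Finset.mem_biUnion]
        refine ⟨(e, e'), ?_, ?_⟩
        · rw [Finset.mem_filter, Finset.mem_product]
          exact ⟨⟨he, he'⟩, hne⟩
        · rw [Fintype.mem_piFinset]
          intro i
          rw [nsRows, Finset.mem_filter]
          exact ⟨Finset.mem_univ _, hiff i⟩
      have hcards : (m^n)^t ≤ ∑ q ∈ (E ×ˢ E).filter (fun q => q.1 ≠ q.2),
          (nsRows n m q.1 q.2).card ^ t := by
        calc (m^n)^t = (univ : Finset (Fin t → Fin n → Fin m)).card := by
              rw [Finset.card_univ]
              simp [Fintype.card_fun]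
        _ ≤ _ := Finset.card_le_card hcov
        _ ≤ _ := Finset.card_biUnion_le
        _ = _ := by
              apply Finset.sum_congr rfl
              intro q _
              rw [Fintype.card_piFinset]
              simp [Finset.prod_const]
      -- real bounds
      set q0 : ℝ := 1 - (p:ℝ)/(8*d) with hq0def
      have hq0nn : 0 ≤ q0 := by
        rw [hq0def]
        have : (p:ℝ)/(8*d) ≤ 1 := by
          rw [div_le_one (by linarith)]
          linarith
        linarith
      have hm0 : (0:ℝ) < (m:ℝ) := by
        rw [hm]; push_cast; linarith
      have hterm : ∀ q ∈ (E ×ˢ E).filter (fun q => q.1 ≠ q.2),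
          (((nsRows n m q.1 q.2).card ^ t : ℕ) : ℝ) ≤ (q0 * (m:ℝ)^n)^t := by
        intro q hq
        rw [Finset.mem_filter, Finset.mem_product] at hq
        have hpb := pair_bound hm hp hpd q.1 q.2 (hcard q.1 hq.1.1)
          (hsep q.1 hq.1.1 q.2 hq.1.2 hq.2)
        push_cast
        calc ((nsRows n m q.1 q.2).card : ℝ)^t ≤ ((1 - (p:ℝ)/(8*d)) * (m:ℝ)^n)^t :=
              pow_le_pow_left₀ (by positivity) hpb t
        _ = (q0 * (m:ℝ)^n)^t := by rw [hq0def]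
      have hsum : (((m:ℝ)^n)^t : ℝ) ≤ (E.card:ℝ)^2 * (q0 * (m:ℝ)^n)^t := by
        have h1 : (((m^n)^t : ℕ) : ℝ) ≤
            ∑ q ∈ (E ×ˢ E).filter (fun q => q.1 ≠ q.2),
              (((nsRows n m q.1 q.2).card ^ t : ℕ) : ℝ) := by
          rw [← Nat.cast_sum]
          exact_mod_cast hcards
        have h2 : ∑ q ∈ (E ×ˢ E).filter (fun q => q.1 ≠ q.2),
            (((nsRows n m q.1 q.2).card ^ t : ℕ) : ℝ)
            ≤ ((E ×ˢ E).filter (fun q => q.1 ≠ q.2)).card • ((q0 * (m:ℝ)^n)^t) :=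
          Finset.sum_le_card_nsmul _ _ _ hterm
        have h3 : (((E ×ˢ E).filter (fun q => q.1 ≠ q.2)).card : ℝ) ≤ (E.card:ℝ)^2 := by
          have : ((E ×ˢ E).filter (fun q => q.1 ≠ q.2)).card ≤ (E ×ˢ E).card :=
            Finset.card_filter_le _ _
          rw [Finset.card_product] at this
          push_cast
          exact_mod_cast le_trans this (le_of_eq (sq E.card).symm)
        rw [nsmul_eq_mul] at h2
        have h4 : (0:ℝ) ≤ (q0 * (m:ℝ)^n)^t := by positivity
        have h5 := mul_le_mul_of_nonneg_right h3 h4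
        push_cast at h1 h2
        linarith
      -- derive 1 ≤ N^2 q0^t
      have hMnt : (0:ℝ) < ((m:ℝ)^n)^t := by positivity
      have hone : 1 ≤ (E.card:ℝ)^2 * q0^t := by
        rw [mul_pow] at hsum
        have := le_of_mul_le_mul_right (by linarith [hsum] : 1 * ((m:ℝ)^n)^t ≤ ((E.card:ℝ)^2 * q0^t) * ((m:ℝ)^n)^t) hMnt
        linarith
      -- and N^2 q0^t < 1
      have hNpos : (0:ℝ) < (E.card:ℝ) := by
        have : (0:ℕ) < E.card := by omega
        exact_mod_cast this
      have hq0exp : q0 ≤ Real.exp (-((p:ℝ)/(8*d))) := by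
        have := Real.add_one_le_exp (-((p:ℝ)/(8*d)))
        rw [hq0def]
        linarith
      have hqt : q0^t ≤ Real.exp (-((p:ℝ)/(8*d)))^t := pow_le_pow_left₀ hq0nn hq0exp t
      have hexp : Real.exp (-((p:ℝ)/(8*d)))^t = Real.exp ((t:ℝ) * (-((p:ℝ)/(8*d)))) := by
        rw [Real.exp_nat_mul]
      have hexplt : Real.exp ((t:ℝ) * (-((p:ℝ)/(8*d)))) < Real.exp (-(2*L)) := by
        apply Real.exp_lt_exp.mpr
        have hc : 16 * ((d:ℝ)/p) * L * ((p:ℝ)/(8*d)) = 2*L := by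
          field_simp
          ring
        have := mul_lt_mul_of_pos_right htx (by positivity : (0:ℝ) < (p:ℝ)/(8*d))
        rw [hc] at this
        nlinarith
      have hexp2 : Real.exp (-(2*L)) = 1/(E.card:ℝ)^2 := by
        rw [Real.exp_neg, show (2:ℝ)*L = L + L from by ring, Real.exp_add, hLdef,
          Real.exp_log hNpos, one_div, pow_two]
      have hlt : (E.card:ℝ)^2 * q0^t < 1 := by
        have h5 : q0^t < 1/(E.card:ℝ)^2 := by
          calc q0^t ≤ Real.exp (-((p:ℝ)/(8*d)))^t := hqt
          _ = Real.exp ((t:ℝ) * (-((p:ℝ)/(8*d)))) := hexp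
          _ < Real.exp (-(2*L)) := hexplt
          _ = 1/(E.card:ℝ)^2 := hexp2
        have h6 : (0:ℝ) < (E.card:ℝ)^2 := by positivity
        calc (E.card:ℝ)^2 * q0^t < (E.card:ℝ)^2 * (1/(E.card:ℝ)^2) :=
              mul_lt_mul_of_pos_left h5 h6
        _ = 1 := by field_simp
      linarith
    obtain ⟨ω, hω⟩ := main
    refine ⟨t, fun i j => decide (ω i j = 0), htle, ?_⟩
    intro e he e' he' hne heq
    apply hω e he e' he' hne
    intro i
    have h2 := congrFun heq i
    simp only [decide_eq_true_eq] at h2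
    exact iff_of_eq h2
end

section
/- Let E be a family of hyperedges on [n], each of size at most d, let 1 ≤ q ≤ |E|-1, and let χ = min{|(∪_{i=1}^q e'_i)\e| : e, e'_1,...,e'_q distinct hyperedges of E}. Then there exists a trivial two-stage group testing algorithm finding the defective hyperedge whose total number of tests t satisfies t < (2e(d+χ)/χ) · (1 + ln( C(d+χ-1, χ-1) · β )) + dq, where β = min{ e^q·|E|·((|E|-1)/q)^q , e^{d+χ-1}·((n+d-1)/(d+χ-1))^{d+χ} }. -/
set_option linter.unusedSectionVars false
set_option maxHeartbeats 6000000

open Finset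

namespace TwoStageGT
open scoped Classical

section weights

variable {α : Type*} [Fintype α] [DecidableEq α]

noncomputable def W (p : ℝ) (P : Finset α) : ℝ :=
  p ^ P.card * (1 - p) ^ (Fintype.card α - P.card)

lemma sum_pow_card (s : Finset α) (x y : ℝ) :
    ∑ t ∈ s.powerset, x ^ t.card * y ^ (s.card - t.card) = (x + y) ^ s.card := by
  have h := Finset.prod_add (fun _ : α => x) (fun _ : α => y) s
  simp only [Finset.prod_const] at h
  rw [h]
  apply Finset.sum_congr rfl
  intro t ht
  rw [card_sdiff_of_subset (mem_powerset.mp ht)]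

lemma sum_W_powerset (p : ℝ) (s : Finset α) :
    ∑ P ∈ s.powerset, W p P = (1 - p) ^ (Fintype.card α - s.card) := by
  have hs : s.card ≤ Fintype.card α := by
    simpa using Finset.card_le_univ s
  have : ∀ P ∈ s.powerset, W p P
      = (1 - p) ^ (Fintype.card α - s.card) * (p ^ P.card * (1 - p) ^ (s.card - P.card)) := by
    intro P hP
    have hPs : P ⊆ s := mem_powerset.mp hP
    have hPc : P.card ≤ s.card := card_le_card hPs
    have : Fintype.card α - P.card = (Fintype.card α - s.card) + (s.card - P.card) := by omega
    rw [W, this, pow_add]; ring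
  rw [Finset.sum_congr rfl this, ← Finset.mul_sum, sum_pow_card]
  norm_num

lemma filter_inter_empty (A : Finset α) :
    (univ : Finset α).powerset.filter (fun P => P ∩ A = ∅) = ((univ : Finset α) \ A).powerset := by
  ext P
  simp only [mem_filter, mem_powerset, subset_sdiff, subset_univ, true_and,
    ← Finset.disjoint_iff_inter_eq_empty]

lemma sum_W_avoid (p : ℝ) (A : Finset α) :
    ∑ P ∈ (univ : Finset α).powerset.filter (fun P => P ∩ A = ∅), W p P = (1 - p) ^ A.card := by
  rw [filter_inter_empty, sum_W_powerset, card_sdiff_of_subset (subset_univ A), card_univ]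
  congr 1
  have : A.card ≤ Fintype.card α := by simpa using Finset.card_le_univ A
  omega

lemma sum_W_cover (p : ℝ) (D S : Finset α) (hDS : Disjoint D S) :
    ∑ P ∈ (univ : Finset α).powerset.filter (fun P => P ∩ D = ∅ ∧ (P ∩ S).Nonempty), W p P
      = (1 - p) ^ D.card - (1 - p) ^ (D.card + S.card) := by
  set A := (univ : Finset α).powerset.filter (fun P => P ∩ D = ∅) with hA
  set B := (univ : Finset α).powerset.filter (fun P => P ∩ (D ∪ S) = ∅) with hB
  have hdistrib : ∀ P : Finset α, P ∩ (D ∪ S) = (P ∩ D) ∪ (P ∩ S) := fun P =>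
    Finset.inter_union_distrib_left P D S
  have hBA : B ⊆ A := by
    intro P hP
    simp only [hA, hB, mem_filter] at *
    refine ⟨hP.1, ?_⟩
    have := hP.2
    rw [hdistrib P, Finset.union_eq_empty] at this
    exact this.1
  have hfe : (univ : Finset α).powerset.filter (fun P => P ∩ D = ∅ ∧ (P ∩ S).Nonempty) = A \ B := by
    ext P
    simp only [hA, hB, mem_filter, mem_sdiff, mem_powerset, subset_univ, true_and]
    constructor
    · rintro ⟨h1, h2⟩
      refine ⟨h1, ?_⟩
      rw [hdistrib P, h1, Finset.empty_union]
      exact fun h => by simp [h] at h2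
    · rintro ⟨h1, h2⟩
      rw [hdistrib P, h1, Finset.empty_union] at h2
      exact ⟨h1, Finset.nonempty_iff_ne_empty.mpr h2⟩
  rw [hfe, Finset.sum_sdiff_eq_sub hBA]
  have h1 : ∑ P ∈ A, W p P = (1 - p) ^ D.card := sum_W_avoid p D
  have h2 : ∑ P ∈ B, W p P = (1 - p) ^ (D ∪ S).card := sum_W_avoid p (D ∪ S)
  rw [h1, h2, Finset.card_union_of_disjoint hDS]

end weights

section greedy



lemma exists_good_pool {α β : Type*} (Ω : Finset α) (w : α → ℝ) (hw : ∀ P ∈ Ω, 0 ≤ w P)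
    (hsum : ∑ P ∈ Ω, w P = 1) (cov : α → β → Prop) [∀ P z, Decidable (cov P z)] (ρ : ℝ)
    (R : Finset β) (hcov : ∀ z ∈ R, ρ ≤ ∑ P ∈ Ω.filter (fun P => cov P z), w P) :
    ∃ P ∈ Ω, ((R.filter (fun z => ¬ cov P z)).card : ℝ) ≤ (1 - ρ) * R.card := by
  have hΩne : Ω.Nonempty := by
    rcases Finset.eq_empty_or_nonempty Ω with h | h
    · rw [h] at hsum; simp at hsum
    · exact h
  obtain ⟨P0, hP0, hmax⟩ := Finset.exists_max_image Ω (fun P => ((R.filter (fun z => cov P z)).card : ℝ)) hΩne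
  refine ⟨P0, hP0, ?_⟩
  have key : ρ * R.card ≤ ((R.filter (fun z => cov P0 z)).card : ℝ) := by
    have h1 : ∑ P ∈ Ω, w P * ((R.filter (fun z => cov P z)).card : ℝ)
        = ∑ z ∈ R, ∑ P ∈ Ω.filter (fun P => cov P z), w P := by
      have : ∀ P ∈ Ω, w P * ((R.filter (fun z => cov P z)).card : ℝ)
          = ∑ z ∈ R, if cov P z then w P else 0 := by
        intro P _
        rw [Finset.card_filter]
        push_cast
        rw [Finset.mul_sum]
        apply Finset.sum_congr rfl
        intro z _
        by_cases h : cov P z <;> simp [h]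
      rw [Finset.sum_congr rfl this, Finset.sum_comm]
      apply Finset.sum_congr rfl
      intro z _
      rw [Finset.sum_filter]
    have h2 : ρ * R.card ≤ ∑ P ∈ Ω, w P * ((R.filter (fun z => cov P z)).card : ℝ) := by
      rw [h1, mul_comm]
      calc (R.card : ℝ) * ρ = ∑ _z ∈ R, ρ := by rw [Finset.sum_const, nsmul_eq_mul]
        _ ≤ _ := Finset.sum_le_sum hcov
    have h3 : ∑ P ∈ Ω, w P * ((R.filter (fun z => cov P z)).card : ℝ)
        ≤ ((R.filter (fun z => cov P0 z)).card : ℝ) := by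
      calc ∑ P ∈ Ω, w P * ((R.filter (fun z => cov P z)).card : ℝ)
          ≤ ∑ P ∈ Ω, w P * ((R.filter (fun z => cov P0 z)).card : ℝ) := by
            apply Finset.sum_le_sum
            intro P hP
            exact mul_le_mul_of_nonneg_left (hmax P hP) (hw P hP)
        _ = ((R.filter (fun z => cov P0 z)).card : ℝ) := by
            rw [← Finset.sum_mul, hsum, one_mul]
    linarith
  have hsplit : (R.filter (fun z => cov P0 z)).card + (R.filter (fun z => ¬ cov P0 z)).card = R.card :=
    Finset.card_filter_add_card_filter_not (fun z => cov P0 z)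
  have : ((R.filter (fun z => cov P0 z)).card : ℝ) + ((R.filter (fun z => ¬ cov P0 z)).card : ℝ)
      = (R.card : ℝ) := by exact_mod_cast congrArg (Nat.cast : ℕ → ℝ) hsplit
  nlinarith [key]

lemma exists_pools {α β : Type*} (Ω : Finset α) (w : α → ℝ) (hw : ∀ P ∈ Ω, 0 ≤ w P)
    (hsum : ∑ P ∈ Ω, w P = 1) (cov : α → β → Prop) [∀ P z, Decidable (cov P z)] (ρ : ℝ) (hρ1 : ρ ≤ 1)
    (Pat : Finset β) (hcov : ∀ z ∈ Pat, ρ ≤ ∑ P ∈ Ω.filter (fun P => cov P z), w P)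
    :
    ∀ t : ℕ, ∃ M : Fin t → α,
      ((Pat.filter (fun z => ∀ i, ¬ cov (M i) z)).card : ℝ) ≤ (1 - ρ) ^ t * Pat.card := by
  intro t
  induction t with
  | zero =>
    refine ⟨fun i => i.elim0, ?_⟩
    have : Pat.filter (fun z => ∀ i : Fin 0, ¬ cov (i.elim0 : α) z) = Pat := by
      apply Finset.filter_true_of_mem
      intro z _ i
      exact i.elim0
    rw [this]
    simp
  | succ t ih =>
    obtain ⟨M, hM⟩ := ih
    set R := Pat.filter (fun z => ∀ i, ¬ cov (M i) z) with hR
    obtain ⟨P0, _hP0, hP0le⟩ := exists_good_pool Ω w hw hsum cov ρ R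
      (fun z hz => hcov z (Finset.mem_of_mem_filter z hz))
    set M' : Fin (t+1) → α := Fin.cons P0 M with hM'
    refine ⟨M', ?_⟩
    have heq : Pat.filter (fun z => ∀ i : Fin (t+1), ¬ cov (M' i) z)
        = R.filter (fun z => ¬ cov P0 z) := by
      rw [hR, Finset.filter_filter]
      apply Finset.filter_congr
      intro z _
      constructor
      · intro h
        exact ⟨fun i => by simpa [hM'] using h i.succ, by simpa [hM'] using h 0⟩
      · rintro ⟨h1, h2⟩ i
        refine Fin.cases ?_ ?_ i
        · simpa [hM'] using h2
        · intro j; simpa [hM'] using h1 j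
    rw [heq]
    have h1ρ : (0:ℝ) ≤ 1 - ρ := by linarith
    calc ((R.filter (fun z => ¬ cov P0 z)).card : ℝ) ≤ (1 - ρ) * R.card := hP0le
      _ ≤ (1 - ρ) * ((1 - ρ) ^ t * Pat.card) := by
          apply mul_le_mul_of_nonneg_left hM h1ρ
      _ = (1 - ρ) ^ (t+1) * Pat.card := by ring

end greedy

section counts

lemma sum_choose_le (ν J : ℕ) :
    ∑ j ∈ Finset.range (J+1), ν.choose j ≤ (ν + J).choose J := by
  induction J with
  | zero => simp
  | succ J ih =>
    rw [Finset.sum_range_succ]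
    have h1 : ν.choose (J+1) ≤ (ν + J).choose (J+1) :=
      Nat.choose_le_choose _ (Nat.le_add_right ν J)
    have h2 : (ν + (J+1)).choose (J+1) = (ν + J).choose J + (ν + J).choose (J+1) := by
      have : ν + (J + 1) = (ν + J) + 1 := by omega
      rw [this, Nat.choose_succ_succ']
    omega

lemma le_choose : ∀ k j : ℕ, 1 ≤ j → j < k → k ≤ k.choose j := by
  intro k
  induction k with
  | zero => intro j h1 h2; omega
  | succ k ih =>
    intro j h1 h2
    rcases Nat.lt_or_ge j k with h | h
    · obtain ⟨j', rfl⟩ : ∃ j', j = j' + 1 := ⟨j - 1, by omega⟩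
      rw [Nat.choose_succ_succ]
      rcases Nat.eq_or_lt_of_le h1 with h1' | h1'
      · -- j' = 0
        have hj' : j' = 0 := by omega
        subst hj'
        simp only [Nat.choose_zero_right]
        have : k ≤ k.choose 1 := by
          rcases Nat.eq_or_lt_of_le (show 1 ≤ k by omega) with hk | hk
          · rw [← hk]; simp
          · exact ih 1 le_rfl hk
        simp only [Nat.succ_eq_add_one, Nat.zero_add] at *
        omega
      · have hrec := ih (j'+1) h1 h
        have hpos : 0 < k.choose j' := Nat.choose_pos (by omega)
        simp only [Nat.succ_eq_add_one] at *
        omega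
    · have : j = k := by omega
      subst this
      rw [Nat.choose_succ_self_right]

lemma pow_self_le_exp_factorial : ∀ k : ℕ, (k:ℝ)^k ≤ Real.exp 1 ^ k * (k.factorial : ℝ) := by
  intro k
  induction k with
  | zero => simp
  | succ k ih =>
    rcases Nat.eq_zero_or_pos k with rfl | hk
    · simpa using Real.one_le_exp (by norm_num)
    have hkR : (0:ℝ) < (k:ℝ) := by exact_mod_cast hk
    have key : ((k:ℝ)+1)^k ≤ Real.exp 1 * (k:ℝ)^k := by
      have h1 : ((k:ℝ)+1) ≤ (k:ℝ) * Real.exp ((k:ℝ)⁻¹) := by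
        have := Real.add_one_le_exp ((k:ℝ)⁻¹)
        calc ((k:ℝ)+1) = (k:ℝ) * ((k:ℝ)⁻¹ + 1) := by field_simp; ring
          _ ≤ (k:ℝ) * Real.exp ((k:ℝ)⁻¹) := by
              apply mul_le_mul_of_nonneg_left this (le_of_lt hkR)
      calc ((k:ℝ)+1)^k ≤ ((k:ℝ) * Real.exp ((k:ℝ)⁻¹))^k := by
            apply pow_le_pow_left₀ (by positivity) h1
        _ = (k:ℝ)^k * Real.exp ((k:ℝ)⁻¹) ^ k := by rw [mul_pow]
        _ = (k:ℝ)^k * Real.exp 1 := by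
            rw [← Real.exp_nat_mul]
            congr 1
            field_simp
        _ = Real.exp 1 * (k:ℝ)^k := by ring
    have hcast : ((k+1 : ℕ) : ℝ) = (k:ℝ) + 1 := by push_cast; ring
    have hfacc : (((k+1 : ℕ)).factorial : ℝ) = ((k:ℝ)+1) * (k.factorial : ℝ) := by
      rw [Nat.factorial_succ]; push_cast; ring
    have hfactnn : (0:ℝ) ≤ (k.factorial : ℝ) := by positivity
    calc ((k+1:ℕ):ℝ)^(k+1) = ((k:ℝ)+1) * ((k:ℝ)+1)^k := by rw [hcast]; ring
      _ ≤ ((k:ℝ)+1) * (Real.exp 1 * (k:ℝ)^k) := by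
          apply mul_le_mul_of_nonneg_left key (by positivity)
      _ ≤ ((k:ℝ)+1) * (Real.exp 1 * (Real.exp 1 ^ k * (k.factorial : ℝ))) := by
          apply mul_le_mul_of_nonneg_left _ (by positivity)
          apply mul_le_mul_of_nonneg_left ih (le_of_lt (Real.exp_pos 1))
      _ = Real.exp 1 ^ (k+1) * (((k+1:ℕ)).factorial : ℝ) := by
          rw [hfacc]; ring


lemma choose_le_e_pow (a b : ℕ) (hb : 1 ≤ b) :
    (a.choose b : ℝ) ≤ (Real.exp 1 * a / b) ^ b := by
  have h1 : (a.choose b : ℝ) ≤ (a:ℝ)^b / (b.factorial : ℝ) := by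
    exact_mod_cast Nat.choose_le_pow_div b a
  have hbR : (0:ℝ) < b := by exact_mod_cast hb
  have h2 : (b:ℝ)^b ≤ Real.exp 1 ^ b * (b.factorial : ℝ) := pow_self_le_exp_factorial b
  have hfp : (0:ℝ) < (b.factorial : ℝ) := by exact_mod_cast b.factorial_pos
  have key : (a:ℝ)^b / (b.factorial:ℝ) ≤ (Real.exp 1 * a / b)^b := by
    rw [div_pow, mul_pow, div_le_div_iff₀ hfp (by positivity)]
    calc (a:ℝ)^b * (b:ℝ)^b ≤ (a:ℝ)^b * (Real.exp 1 ^ b * (b.factorial:ℝ)) := by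
          apply mul_le_mul_of_nonneg_left h2 (by positivity)
      _ = Real.exp 1 ^ b * (a:ℝ)^b * (b.factorial:ℝ) := by ring
  linarith


lemma sum_choose_le' (ν J : ℕ) :
    ∑ j ∈ Finset.range (J+1), ν.choose j ≤ (ν + J).choose J := by
  induction J with
  | zero => simp
  | succ J ih =>
    rw [Finset.sum_range_succ]
    have h1 : ν.choose (J+1) ≤ (ν + J).choose (J+1) :=
      Nat.choose_le_choose _ (Nat.le_add_right ν J)
    have h2 : (ν + (J+1)).choose (J+1) = (ν + J).choose J + (ν + J).choose (J+1) := by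
      have : ν + (J + 1) = (ν + J) + 1 := by omega
      rw [this, Nat.choose_succ_succ']
    omega

lemma count_chain (n d χ : ℕ) (hχ : 1 ≤ χ) (hn : 1 ≤ n) :
    χ * ∑ k ∈ Finset.range (d+χ+1), n.choose k * k.choose χ
      ≤ (d+χ-1).choose (χ-1) * (n * ((n + (d+χ) - 2).choose (d+χ-1))) := by
  set m := d + χ with hm
  have hm1 : 1 ≤ m := by omega
  rw [Finset.mul_sum]
  rw [show m + 1 = (m - 1 + 1) + 1 by omega]
  rw [Finset.sum_range_succ']
  have h0 : χ * (n.choose 0 * Nat.choose 0 χ) = 0 := by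
    rw [Nat.choose_eq_zero_of_lt (by omega : 0 < χ)]
    ring
  rw [h0, add_zero]
  have hterm : ∀ j, j < m - 1 + 1 →
      χ * (n.choose (j+1) * (j+1).choose χ)
        ≤ (n * (n-1).choose j) * (m-1).choose (χ-1) := by
    intro j hj
    have e1 : χ * (j+1).choose χ = (j+1) * j.choose (χ-1) := by
      have h := Nat.add_one_mul_choose_eq j (χ-1)
      rw [show χ - 1 + 1 = χ by omega] at h
      rw [mul_comm χ ((j+1).choose χ), ← h]
    have e2 : (j+1) * n.choose (j+1) = n * (n-1).choose j := by
      have h := Nat.add_one_mul_choose_eq (n-1) j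
      rw [show n - 1 + 1 = n by omega] at h
      rw [mul_comm (j+1) (n.choose (j+1)), ← h]
    have e3 : j.choose (χ-1) ≤ (m-1).choose (χ-1) :=
      Nat.choose_le_choose _ (by omega)
    calc χ * (n.choose (j+1) * (j+1).choose χ)
        = n.choose (j+1) * (χ * (j+1).choose χ) := by ring
      _ = n.choose (j+1) * ((j+1) * j.choose (χ-1)) := by rw [e1]
      _ = ((j+1) * n.choose (j+1)) * j.choose (χ-1) := by ring
      _ = (n * (n-1).choose j) * j.choose (χ-1) := by rw [e2]
      _ ≤ (n * (n-1).choose j) * (m-1).choose (χ-1) :=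
          Nat.mul_le_mul_left _ e3
  calc ∑ j ∈ Finset.range (m-1+1), χ * (n.choose (j+1) * (j+1).choose χ)
      ≤ ∑ j ∈ Finset.range (m-1+1), (n * (n-1).choose j) * (m-1).choose (χ-1) := by
        apply Finset.sum_le_sum
        intro j hj
        exact hterm j (Finset.mem_range.mp hj)
    _ = (m-1).choose (χ-1) * (n * ∑ j ∈ Finset.range (m-1+1), (n-1).choose j) := by
        rw [Finset.mul_sum, Finset.mul_sum]
        apply Finset.sum_congr rfl
        intro j _
        ring
    _ ≤ (m-1).choose (χ-1) * (n * ((n-1) + (m-1)).choose (m-1)) := by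
        apply Nat.mul_le_mul_left
        apply Nat.mul_le_mul_left
        exact sum_choose_le' (n-1) (m-1)
    _ = (m-1).choose (χ-1) * (n * (n + m - 2).choose (m-1)) := by
        rw [show (n-1) + (m-1) = n + m - 2 by omega]


lemma card_pairs_le {γ : Type*} [Fintype γ] [DecidableEq γ] (d χ : ℕ)
    (Z : Finset (Finset γ × Finset γ))
    (hZ : ∀ z ∈ Z, z.1.card ≤ d ∧ z.2.card = χ ∧ Disjoint z.1 z.2) :
    Z.card ≤ ∑ k ∈ Finset.range (d+χ+1), (Fintype.card γ).choose k * k.choose χ := by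
  set T : Finset (Finset γ × Finset γ) :=
    (Finset.range (d+χ+1)).biUnion (fun k =>
      (Finset.powersetCard k (univ : Finset γ)).biUnion (fun U =>
        (Finset.powersetCard χ U).image (fun S => (U, S)))) with hT
  have hmaps : ∀ z ∈ Z, (z.1 ∪ z.2, z.2) ∈ T := by
    intro z hz
    obtain ⟨h1, h2, h3⟩ := hZ z hz
    have hcard : (z.1 ∪ z.2).card = z.1.card + z.2.card := Finset.card_union_of_disjoint h3
    rw [hT]
    apply Finset.mem_biUnion.mpr
    refine ⟨(z.1 ∪ z.2).card, Finset.mem_range.mpr (by omega), ?_⟩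
    apply Finset.mem_biUnion.mpr
    refine ⟨z.1 ∪ z.2, Finset.mem_powersetCard.mpr ⟨Finset.subset_univ _, rfl⟩, ?_⟩
    apply Finset.mem_image.mpr
    exact ⟨z.2, Finset.mem_powersetCard.mpr ⟨Finset.subset_union_right, h2⟩, rfl⟩
  have hinj : Set.InjOn (fun z : Finset γ × Finset γ => (z.1 ∪ z.2, z.2)) Z := by
    intro z hz z' hz' heq
    simp only [Prod.mk.injEq] at heq
    obtain ⟨hU, hS⟩ := heq
    have d1 := (hZ z hz).2.2
    have d2 := (hZ z' hz').2.2
    have e1 : z.1 = (z.1 ∪ z.2) \ z.2 := by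
      rw [Finset.union_sdiff_cancel_right d1]
    have e2 : z'.1 = (z'.1 ∪ z'.2) \ z'.2 := by
      rw [Finset.union_sdiff_cancel_right d2]
    have : z.1 = z'.1 := by rw [e1, e2, hU, hS]
    exact Prod.ext this hS
  have h1 : Z.card ≤ T.card := Finset.card_le_card_of_injOn _ hmaps hinj
  have h2 : T.card ≤ ∑ k ∈ Finset.range (d+χ+1), (Fintype.card γ).choose k * k.choose χ := by
    rw [hT]
    refine le_trans (Finset.card_biUnion_le) ?_
    apply Finset.sum_le_sum
    intro k _
    refine le_trans (Finset.card_biUnion_le) ?_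
    calc ∑ U ∈ Finset.powersetCard k (univ : Finset γ),
          ((Finset.powersetCard χ U).image (fun S => (U, S))).card
        ≤ ∑ U ∈ Finset.powersetCard k (univ : Finset γ), k.choose χ := by
          apply Finset.sum_le_sum
          intro U hU
          have hUc : U.card = k := (Finset.mem_powersetCard.mp hU).2
          calc ((Finset.powersetCard χ U).image (fun S => (U, S))).card
              ≤ (Finset.powersetCard χ U).card := Finset.card_image_le
            _ = U.card.choose χ := Finset.card_powersetCard _ _
            _ = k.choose χ := by rw [hUc]
      _ = (Fintype.card γ).choose k * k.choose χ := by
          rw [Finset.sum_const, Finset.card_powersetCard, Finset.card_univ, smul_eq_mul]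
  omega

lemma one_le_mul2 {a b : ℝ} (ha : 1 ≤ a) (hb : 1 ≤ b) : 1 ≤ a*b := by nlinarith

lemma one_le_mul3 {a b c : ℝ} (ha : 1 ≤ a) (hb : 1 ≤ b) (hc : 1 ≤ c) : 1 ≤ a*b*c :=
  one_le_mul2 (one_le_mul2 ha hb) hc

lemma le_e_sq {x c e : ℝ} (hx : 1 ≤ x) (hc : 1 ≤ c) (he : 1 ≤ e) : x ≤ e*(c*x)^2 := by
  have h1 : x ≤ x^2 := by nlinarith
  have hc2 : 1 ≤ c^2 := by nlinarith
  have h2 : x^2 ≤ (c*x)^2 := by nlinarith [sq_nonneg x]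
  have h3 : (c*x)^2 ≤ e*(c*x)^2 := by nlinarith [sq_nonneg (c*x)]
  linarith

end counts

end TwoStageGT


/-- Trivial two-stage group testing on a hypergraph `([n],E)` with hyperedges of
size at most `d`: a non-adaptive first stage (pools `M i`), a second stage testing
only individual elements (the elements `stage2 R` chosen from the first-stage
response vector `R`), and a decoder which, from the first-stage responses and the
individual test results, outputs the defective hyperedge.  With
`χ = min{|(∪_{i=1}^q e'_i)\e|}` over all `q+1` distinct hyperedges, the total
number of tests `t` satisfies
`t < (2e(d+χ)/χ)·(1 + ln(C(d+χ-1,χ-1)·β)) + dq`. -/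
theorem trivial_two_stage_exists (n d q χ : ℕ) (hd : 0 < d) (hq : 1 ≤ q)
    (hχ : 0 < χ) (E : Finset (Finset (Fin n))) (hqE : q ≤ E.card - 1)
    (hEd : ∀ e ∈ E, e.card ≤ d)
    (hχmin : IsLeast {c : ℕ | ∃ e ∈ E, ∃ F ⊆ E.erase e,
      F.card = q ∧ c = ((F.sup id) \ e).card} χ) :
    ∃ (t : ℕ) (M : Fin t → Finset (Fin n))
      (stage2 : (Fin t → Prop) → Finset (Fin n))
      (dec : (Fin t → Prop) → (Fin n → Prop) → Finset (Fin n)),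
      ∀ estar ∈ E,
        dec (fun i => ((M i) ∩ estar).Nonempty)
            (fun v => v ∈ stage2 (fun i => ((M i) ∩ estar).Nonempty) ∧ v ∈ estar)
          = estar ∧
        ((t : ℝ) + ((stage2 (fun i => ((M i) ∩ estar).Nonempty)).card : ℝ) <
          (2 * Real.exp 1 * ((d : ℝ) + χ) / χ) *
            (1 + Real.log (((d + χ - 1).choose (χ - 1) : ℝ) *
              min (Real.exp 1 ^ q * (E.card : ℝ) * (((E.card : ℝ) - 1) / q) ^ q)
                  (Real.exp 1 ^ (d + χ - 1) *
                    (((n : ℝ) + d - 1) / ((d : ℝ) + χ - 1)) ^ (d + χ))))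
          + (d : ℝ) * q) := by
  classical
  obtain ⟨hχmem, hχlb⟩ := hχmin
  obtain ⟨e0, he0, F0, hF0, hF0c, hc0⟩ := hχmem
  have hEcard : 2 ≤ E.card := by omega
  have hχn : χ ≤ n := by
    rw [hc0]
    calc ((F0.sup id) \ e0).card ≤ (univ : Finset (Fin n)).card := Finset.card_le_univ _
      _ = n := by simp
  have hn1 : 1 ≤ n := le_trans hχ hχn
  -- real casts
  have hχR : (0:ℝ) < (χ:ℝ) := by exact_mod_cast hχ
  have hdR : (0:ℝ) < (d:ℝ) := by exact_mod_cast hd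
  have hmR0 : (0:ℝ) < (d:ℝ) + (χ:ℝ) := by positivity
  have he1 : (1:ℝ) ≤ Real.exp 1 := Real.one_le_exp (by norm_num)
  have he2 : (2:ℝ) ≤ Real.exp 1 := by
    have := Real.add_one_le_exp 1; linarith
  -- the Bernoulli parameter
  set u : ℝ := ((d:ℝ)/((d:ℝ)+(χ:ℝ))) ^ ((χ:ℝ)⁻¹) with hu
  have hdm0 : (0:ℝ) < (d:ℝ)/((d:ℝ)+(χ:ℝ)) := by positivity
  have hdm1 : (d:ℝ)/((d:ℝ)+(χ:ℝ)) < 1 := by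
    rw [div_lt_one hmR0]; linarith
  have hu0 : 0 < u := Real.rpow_pos_of_pos hdm0 _
  have hu1 : u ≤ 1 := Real.rpow_le_one (le_of_lt hdm0) (le_of_lt hdm1) (by positivity)
  have huχ : u ^ χ = (d:ℝ)/((d:ℝ)+(χ:ℝ)) := by
    rw [hu, ← Real.rpow_natCast (((d:ℝ)/((d:ℝ)+(χ:ℝ))) ^ ((χ:ℝ)⁻¹)) χ,
      ← Real.rpow_mul (le_of_lt hdm0)]
    rw [inv_mul_cancel₀ (by exact_mod_cast hχ.ne' : (χ:ℝ) ≠ 0), Real.rpow_one]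
  have hud : Real.exp (-1) ≤ u ^ d := by
    have hlog : Real.log (((d:ℝ)+(χ:ℝ))/(d:ℝ)) ≤ (χ:ℝ)/(d:ℝ) := by
      have h1 : Real.log (((d:ℝ)+(χ:ℝ))/(d:ℝ)) ≤ ((d:ℝ)+(χ:ℝ))/(d:ℝ) - 1 :=
        Real.log_le_sub_one_of_pos (by positivity)
      have h2 : ((d:ℝ)+(χ:ℝ))/(d:ℝ) - 1 = (χ:ℝ)/(d:ℝ) := by field_simp; ring
      linarith
    have hlogdm : Real.log ((d:ℝ)/((d:ℝ)+(χ:ℝ))) = - Real.log (((d:ℝ)+(χ:ℝ))/(d:ℝ)) := by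
      rw [← Real.log_inv]; congr 1; field_simp
    have hupow : u ^ d = Real.exp ((d:ℝ) * (Real.log ((d:ℝ)/((d:ℝ)+(χ:ℝ))) * (χ:ℝ)⁻¹)) := by
      rw [hu, Real.rpow_def_of_pos hdm0, ← Real.exp_nat_mul]
    rw [hupow]
    apply Real.exp_le_exp.mpr
    rw [hlogdm]
    have hineq : (d:ℝ) * (Real.log (((d:ℝ)+(χ:ℝ))/(d:ℝ)) * (χ:ℝ)⁻¹) ≤ 1 := by
      calc (d:ℝ) * (Real.log (((d:ℝ)+(χ:ℝ))/(d:ℝ)) * (χ:ℝ)⁻¹)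
          ≤ (d:ℝ) * (((χ:ℝ)/(d:ℝ)) * (χ:ℝ)⁻¹) := by
            apply mul_le_mul_of_nonneg_left _ (le_of_lt hdR)
            apply mul_le_mul_of_nonneg_right hlog (by positivity)
        _ = 1 := by field_simp
    nlinarith [hineq]
  set p : ℝ := 1 - u with hp
  have hp0 : 0 ≤ p := by rw [hp]; linarith
  have hp1 : p ≤ 1 := by rw [hp]; linarith
  have h1p : 1 - p = u := by rw [hp]; ring
  set ρ : ℝ := u ^ d * ((χ:ℝ)/((d:ℝ)+(χ:ℝ))) with hρ
  have hχm1 : (χ:ℝ)/((d:ℝ)+(χ:ℝ)) ≤ 1 := by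
    rw [div_le_one hmR0]; linarith
  have hρpos : 0 < ρ := by rw [hρ]; positivity
  have hud1 : u ^ d ≤ 1 := pow_le_one₀ (le_of_lt hu0) hu1
  have hudnn : 0 ≤ u ^ d := by positivity
  have hχmnn : 0 ≤ (χ:ℝ)/((d:ℝ)+(χ:ℝ)) := by positivity
  have hρ1 : ρ ≤ 1 := by
    rw [hρ]; nlinarith [hud1, hudnn, hχm1, hχmnn]
  have hρlb : (χ:ℝ)/(Real.exp 1 * ((d:ℝ)+(χ:ℝ))) ≤ ρ := by
    have heq : (χ:ℝ)/(Real.exp 1 * ((d:ℝ)+(χ:ℝ)))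
        = Real.exp (-1) * ((χ:ℝ)/((d:ℝ)+(χ:ℝ))) := by
      rw [Real.exp_neg]
      field_simp
    rw [heq, hρ]
    apply mul_le_mul_of_nonneg_right hud (by positivity)
  -- selection of χ-subsets
  have selspec : ∀ e F : _, ∃ S : Finset (Fin n),
      (e ∈ E ∧ F ⊆ E.erase e ∧ F.card = q) → (S ⊆ (F.sup id) \ e ∧ S.card = χ) := by
    intro e F
    by_cases h : e ∈ E ∧ F ⊆ E.erase e ∧ F.card = q
    · have hle : χ ≤ ((F.sup id) \ e).card := hχlb ⟨e, h.1, F, h.2.1, h.2.2, rfl⟩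
      obtain ⟨S, hS1, hS2⟩ := Finset.exists_subset_card_eq hle
      exact ⟨S, fun _ => ⟨hS1, hS2⟩⟩
    · exact ⟨∅, fun hcc => absurd hcc h⟩
  choose sel hsel using selspec
  -- patterns
  set Pat : Finset (Finset (Fin n) × Finset (Fin n)) :=
    E.biUnion (fun e => ((E.erase e).powersetCard q).image (fun F => (e, sel e F))) with hPat
  have hPatmem : ∀ z ∈ Pat, z.1 ∈ E ∧ z.1.card ≤ d ∧ z.2.card = χ ∧ Disjoint z.1 z.2 := by
    intro z hz
    rw [hPat] at hz
    obtain ⟨e, he, hz2⟩ := Finset.mem_biUnion.mp hz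
    obtain ⟨F, hF, hzeq⟩ := Finset.mem_image.mp hz2
    obtain ⟨hFsub, hFcard⟩ := Finset.mem_powersetCard.mp hF
    obtain ⟨hS1, hS2⟩ := hsel e F ⟨he, hFsub, hFcard⟩
    subst hzeq
    refine ⟨he, hEd e he, hS2, ?_⟩
    rw [Finset.disjoint_left]
    intro a ha hb
    exact (Finset.mem_sdiff.mp (hS1 hb)).2 ha
  set cov : Finset (Fin n) → (Finset (Fin n) × Finset (Fin n)) → Prop :=
    fun P z => P ∩ z.1 = ∅ ∧ (P ∩ z.2).Nonempty with hcovdef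
  have hΩsum : ∑ P ∈ (univ : Finset (Fin n)).powerset, TwoStageGT.W p P = 1 := by
    rw [TwoStageGT.sum_W_powerset]
    simp
  have hWnn : ∀ P ∈ (univ : Finset (Fin n)).powerset, 0 ≤ TwoStageGT.W p P := by
    intro P _
    unfold TwoStageGT.W
    have h1 : (0:ℝ) ≤ 1 - p := by linarith
    positivity
  have hcovlb : ∀ z ∈ Pat, ρ ≤ ∑ P ∈ (univ : Finset (Fin n)).powerset.filter
      (fun P => cov P z), TwoStageGT.W p P := by
    intro z hz
    obtain ⟨-, hzd, hzχ, hzdisj⟩ := hPatmem z hz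
    have hfeq : (univ : Finset (Fin n)).powerset.filter (fun P => cov P z)
        = (univ : Finset (Fin n)).powerset.filter
            (fun P => P ∩ z.1 = ∅ ∧ (P ∩ z.2).Nonempty) := by
      ext P
      simp only [Finset.mem_filter, hcovdef]
    rw [hfeq, TwoStageGT.sum_W_cover p z.1 z.2 hzdisj, h1p, hzχ]
    have hua : u ^ d ≤ u ^ z.1.card := pow_le_pow_of_le_one (le_of_lt hu0) hu1 hzd
    have h1uχ : 1 - u ^ χ = (χ:ℝ)/((d:ℝ)+(χ:ℝ)) := by
      rw [huχ]; field_simp; ring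
    have hexpand : u ^ z.1.card - u ^ (z.1.card + χ)
        = u ^ z.1.card * (1 - u ^ χ) := by
      rw [pow_add]; ring
    rw [hexpand, h1uχ, hρ]
    apply mul_le_mul_of_nonneg_right hua (by positivity)
  -- nonemptiness of patterns
  have hz0 : (e0, sel e0 F0) ∈ Pat := by
    rw [hPat]
    apply Finset.mem_biUnion.mpr
    exact ⟨e0, he0, Finset.mem_image.mpr
      ⟨F0, Finset.mem_powersetCard.mpr ⟨hF0, hF0c⟩, rfl⟩⟩
  have hPpos : 0 < Pat.card := Finset.card_pos.mpr ⟨_, hz0⟩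
  have hP1R : (1:ℝ) ≤ (Pat.card:ℝ) := by exact_mod_cast hPpos
  have hlogPnn : 0 ≤ Real.log (Pat.card:ℝ) := Real.log_nonneg hP1R
  -- the number of first-stage tests
  set t : ℕ := ⌊Real.log (Pat.card:ℝ) / ρ⌋₊ + 1 with ht
  obtain ⟨M, hM⟩ := TwoStageGT.exists_pools (univ : Finset (Fin n)).powerset
    (TwoStageGT.W p) hWnn hΩsum cov ρ hρ1 Pat hcovlb t
  have hfull : ∀ z ∈ Pat, ∃ i : Fin t, cov (M i) z := by
    by_contra hcon
    push_neg at hcon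
    obtain ⟨z, hzPat, hznot⟩ := hcon
    have hzmem : z ∈ Pat.filter (fun z => ∀ i, ¬ cov (M i) z) :=
      Finset.mem_filter.mpr ⟨hzPat, hznot⟩
    have hcard1 : (1:ℝ) ≤ ((Pat.filter (fun z => ∀ i, ¬ cov (M i) z)).card : ℝ) := by
      have h := Finset.card_pos.mpr ⟨z, hzmem⟩
      exact_mod_cast h
    have hlt : (1 - ρ)^t * (Pat.card:ℝ) < 1 := by
      have hexp : (1-ρ)^t ≤ Real.exp (-ρ)^t := by
        apply pow_le_pow_left₀ (by linarith)
        have := Real.add_one_le_exp (-ρ); linarith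
      have hexp2 : Real.exp (-ρ)^t = Real.exp (-(ρ*t)) := by
        rw [← Real.exp_nat_mul]; congr 1; ring
      have hlogt : Real.log (Pat.card:ℝ) < ρ * t := by
        have hfl : Real.log (Pat.card:ℝ)/ρ < (t:ℝ) := by
          rw [ht]; push_cast
          exact Nat.lt_floor_add_one _
        calc Real.log (Pat.card:ℝ) = (Real.log (Pat.card:ℝ)/ρ) * ρ := by field_simp
          _ < (t:ℝ) * ρ := by apply mul_lt_mul_of_pos_right hfl hρpos
          _ = ρ * t := by ring
      calc (1-ρ)^t * (Pat.card:ℝ) ≤ Real.exp (-(ρ*t)) * (Pat.card:ℝ) := by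
            rw [← hexp2]
            apply mul_le_mul_of_nonneg_right hexp (by positivity)
        _ < Real.exp (-(ρ*t)) * Real.exp (ρ*t) := by
            apply mul_lt_mul_of_pos_left _ (Real.exp_pos _)
            calc (Pat.card:ℝ) = Real.exp (Real.log (Pat.card:ℝ)) :=
                  (Real.exp_log (by positivity)).symm
              _ < Real.exp (ρ*t) := Real.exp_lt_exp.mpr hlogt
        _ = 1 := by rw [← Real.exp_add]; simp
    linarith
  -- counting bounds
  have hPat1 : Pat.card ≤ E.card * (E.card - 1).choose q := by
    rw [hPat]
    refine le_trans Finset.card_biUnion_le ?_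
    calc ∑ e ∈ E, (((E.erase e).powersetCard q).image (fun F => (e, sel e F))).card
        ≤ ∑ e ∈ E, (E.card - 1).choose q := by
          apply Finset.sum_le_sum
          intro e he
          refine le_trans Finset.card_image_le ?_
          rw [Finset.card_powersetCard, Finset.card_erase_of_mem he]
      _ = E.card * (E.card - 1).choose q := by
          rw [Finset.sum_const, smul_eq_mul]
  have hPat2 : χ * Pat.card ≤ (d+χ-1).choose (χ-1) * (n * ((n + (d+χ) - 2).choose (d+χ-1))) := by
    have h1 : Pat.card ≤ ∑ k ∈ Finset.range (d+χ+1), n.choose k * k.choose χ := by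
      have h2 := TwoStageGT.card_pairs_le d χ Pat (fun z hz => (hPatmem z hz).2)
      rwa [Fintype.card_fin] at h2
    calc χ * Pat.card ≤ χ * ∑ k ∈ Finset.range (d+χ+1), n.choose k * k.choose χ :=
          Nat.mul_le_mul_left χ h1
      _ ≤ (d+χ-1).choose (χ-1) * (n * ((n + (d+χ) - 2).choose (d+χ-1))) :=
          TwoStageGT.count_chain n d χ hχ hn1
  -- budget bound on t
  have hbudget : (t:ℝ) < 2 * Real.exp 1 * ((d:ℝ) + χ) / χ *
      (1 + Real.log (((d + χ - 1).choose (χ - 1) : ℝ) *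
        min (Real.exp 1 ^ q * (E.card : ℝ) * (((E.card : ℝ) - 1) / q) ^ q)
            (Real.exp 1 ^ (d + χ - 1) *
              (((n : ℝ) + d - 1) / ((d : ℝ) + χ - 1)) ^ (d + χ)))) := by
    -- abbreviations
    set k : ℕ := d + χ - 1 with hk
    have hk1 : 1 ≤ k := by omega
    have hdχk : d + χ = k + 1 := by omega
    set μ : ℝ := (d:ℝ) + ↑χ - 1 with hμ
    set νr : ℝ := (n:ℝ) + ↑d - 1 with hνr
    set Cb : ℝ := ((k.choose (χ - 1) : ℕ) : ℝ) with hCb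
    set T1 : ℝ := Real.exp 1 ^ q * (E.card : ℝ) * (((E.card : ℝ) - 1) / q) ^ q with hT1
    set T2 : ℝ := Real.exp 1 ^ k * (νr / μ) ^ (d + χ) with hT2
    have hχcast : (1:ℝ) ≤ (χ:ℝ) := by exact_mod_cast hχ
    have hdcast : (1:ℝ) ≤ (d:ℝ) := by exact_mod_cast hd
    have hncast : (1:ℝ) ≤ (n:ℝ) := by exact_mod_cast hn1
    have hχnR : (χ:ℝ) ≤ (n:ℝ) := by exact_mod_cast hχn
    have hμ1 : (1:ℝ) ≤ μ := by rw [hμ]; linarith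
    have hμ0 : (0:ℝ) < μ := by linarith
    have hν1 : (1:ℝ) ≤ νr := by rw [hνr]; linarith
    have hν0 : (0:ℝ) < νr := by linarith
    have hνn : (n:ℝ) ≤ νr := by rw [hνr]; linarith
    have hνμ : μ ≤ νr := by rw [hμ, hνr]; linarith
    have hμk : μ = (k:ℝ) := by
      rw [hμ, hk, Nat.cast_sub (by omega : 1 ≤ d + χ)]
      push_cast; ring
    have hCb1 : (1:ℝ) ≤ Cb := by
      rw [hCb]
      exact_mod_cast Nat.succ_le_of_lt (Nat.choose_pos (by omega : χ - 1 ≤ k))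
    have hNR2 : (2:ℝ) ≤ (E.card:ℝ) := by exact_mod_cast hEcard
    have hqR : (0:ℝ) < (q:ℝ) := by exact_mod_cast hq
    have hNq : (q:ℝ) ≤ (E.card:ℝ) - 1 := by
      have h1 : ((q:ℕ):ℝ) ≤ ((E.card - 1 : ℕ):ℝ) := by exact_mod_cast hqE
      rw [Nat.cast_sub (by omega : 1 ≤ E.card)] at h1
      push_cast at h1
      linarith only [h1]
    have hq1 : (1:ℝ) ≤ ((E.card:ℝ) - 1)/q := by
      rw [le_div_iff₀ hqR, one_mul]; exact hNq
    have hT1ge1 : (1:ℝ) ≤ T1 := by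
      have a1 : (1:ℝ) ≤ Real.exp 1 ^ q := one_le_pow₀ he1
      have a3 : (1:ℝ) ≤ (((E.card:ℝ)-1)/q)^q := one_le_pow₀ hq1
      rw [hT1]
      have := TwoStageGT.one_le_mul3 a1 (show (1:ℝ) ≤ (E.card:ℝ) by linarith only [hNR2]) a3
      linarith only [this]
    have hT2ge1 : (1:ℝ) ≤ T2 := by
      have b1 : (1:ℝ) ≤ Real.exp 1 ^ k := one_le_pow₀ he1
      have b2 : (1:ℝ) ≤ νr/μ := by rw [le_div_iff₀ hμ0, one_mul]; exact hνμ
      have b3 : (1:ℝ) ≤ (νr/μ)^(d+χ) := one_le_pow₀ b2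
      rw [hT2]
      exact TwoStageGT.one_le_mul2 b1 b3
    -- bound 1 : P ≤ T1
    have hcast1 : ((E.card - 1 : ℕ):ℝ) = (E.card:ℝ) - 1 := by
      rw [Nat.cast_sub (by omega : 1 ≤ E.card)]; norm_num
    have hch : ((E.card - 1).choose q : ℝ) ≤ (Real.exp 1 * ((E.card:ℝ)-1) / q)^q := by
      have h := TwoStageGT.choose_le_e_pow (E.card - 1) q hq
      rwa [hcast1] at h
    have hP1R' : (Pat.card:ℝ) ≤ (E.card:ℝ) * ((E.card - 1).choose q : ℝ) := by
      exact_mod_cast hPat1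
    have hPb1 : (Pat.card:ℝ) ≤ T1 := by
      have hrw : (Real.exp 1 * ((E.card:ℝ)-1)/q)^q
          = Real.exp 1^q * (((E.card:ℝ)-1)/q)^q := by
        rw [mul_div_assoc, mul_pow]
      calc (Pat.card:ℝ) ≤ (E.card:ℝ) * ((E.card - 1).choose q : ℝ) := hP1R'
        _ ≤ (E.card:ℝ) * (Real.exp 1 * ((E.card:ℝ)-1)/q)^q := by
            apply mul_le_mul_of_nonneg_left hch (Nat.cast_nonneg _)
        _ = T1 := by rw [hrw, hT1]; ring
    -- bound 2 : P ≤ e (Cb T2)^2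
    have hcastw : ((n + (d+χ) - 2 : ℕ):ℝ) = νr + ((χ:ℝ) - 1) := by
      rw [Nat.cast_sub (by omega : 2 ≤ n + (d+χ))]
      push_cast; rw [hνr]; ring
    set wr : ℝ := νr + ((χ:ℝ) - 1) with hwr
    have hw0 : (0:ℝ) < wr := by rw [hwr]; linarith
    have hSS : ((n + (d+χ) - 2).choose k : ℝ) ≤ (Real.exp 1 * wr / μ)^k := by
      have h := TwoStageGT.choose_le_e_pow (n + (d+χ) - 2) k hk1
      rwa [hcastw, ← hμk] at h
    have hP2R : (χ:ℝ) * (Pat.card:ℝ) ≤ Cb * ((n:ℝ) * ((n + (d+χ) - 2).choose k : ℝ)) := by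
      rw [hCb]
      exact_mod_cast hPat2
    have hνk : (n:ℝ) * μ^(k+1) ≤ νr^(k+2) := by
      have h1 : νr^(k+2) = νr * νr^(k+1) := by ring
      rw [h1]
      apply mul_le_mul hνn (pow_le_pow_left₀ (by positivity) hνμ _) (by positivity) (by positivity)
    have hμle : μ ≤ Real.exp 1 ^ (k+1) := by
      have h1 : (k:ℝ) ≤ 2^k := by exact_mod_cast (Nat.lt_two_pow_self (n := k)).le
      have h2 : (2:ℝ)^k ≤ Real.exp 1 ^ k := pow_le_pow_left₀ (by norm_num) he2 k
      have h3 : Real.exp 1 ^ k ≤ Real.exp 1 ^ (k+1) := by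
        apply pow_le_pow_right₀ he1 (by omega)
      rw [hμk]; linarith
    have core2 : (n:ℝ) * wr^k * μ^(k+2) ≤ (χ:ℝ) * Cb * Real.exp 1^(k+1) * νr^(2*k+2) := by
      rcases eq_or_lt_of_le (show 1 ≤ χ from hχ) with hχ1 | hχ2
      · -- χ = 1
        have hχ1' : χ = 1 := hχ1.symm
        have hχR1 : (χ:ℝ) = 1 := by exact_mod_cast hχ1'
        have hCbval : Cb = 1 := by
          rw [hCb, show χ - 1 = 0 by omega, Nat.choose_zero_right]; norm_num
        have hwrν : wr = νr := by rw [hwr, hχR1]; ring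
        rw [hχR1, hCbval, hwrν]
        calc (n:ℝ) * νr^k * μ^(k+2)
            = ((n:ℝ) * μ^(k+1)) * μ * νr^k := by ring
          _ ≤ νr^(k+2) * Real.exp 1^(k+1) * νr^k := by
              apply mul_le_mul_of_nonneg_right _ (by positivity)
              exact mul_le_mul hνk hμle (by positivity) (by positivity)
          _ = 1 * 1 * Real.exp 1^(k+1) * νr^(2*k+2) := by ring
      · -- 2 ≤ χ
        have hχ2R : (2:ℝ) ≤ (χ:ℝ) := by exact_mod_cast hχ2
        have hwle : wr ≤ 2*νr := by rw [hwr]; linarith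
        have hCbμ : μ ≤ Cb := by
          rw [hμk, hCb]
          exact_mod_cast TwoStageGT.le_choose k (χ-1) (by omega) (by omega)
        calc (n:ℝ) * wr^k * μ^(k+2)
            ≤ (n:ℝ) * (2*νr)^k * μ^(k+2) := by
              apply mul_le_mul_of_nonneg_right _ (by positivity)
              apply mul_le_mul_of_nonneg_left _ (by positivity)
              exact pow_le_pow_left₀ (le_of_lt hw0) hwle k
          _ = 2^k * (((n:ℝ) * μ^(k+1)) * μ) * νr^k := by rw [mul_pow]; ring
          _ ≤ 2^k * (νr^(k+2) * Cb) * νr^k := by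
              apply mul_le_mul_of_nonneg_right _ (by positivity)
              apply mul_le_mul_of_nonneg_left _ (by positivity)
              exact mul_le_mul hνk hCbμ (by positivity) (by positivity)
          _ ≤ Real.exp 1^(k+1) * (νr^(k+2) * Cb) * νr^k := by
              apply mul_le_mul_of_nonneg_right _ (by positivity)
              apply mul_le_mul_of_nonneg_right _ (by positivity)
              calc (2:ℝ)^k ≤ Real.exp 1^k := pow_le_pow_left₀ (by norm_num) he2 k
                _ ≤ Real.exp 1^(k+1) := pow_le_pow_right₀ he1 (by omega)
          _ ≤ (χ:ℝ) * Cb * Real.exp 1^(k+1) * νr^(2*k+2) := by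
              have hrest : Real.exp 1^(k+1) * (νr^(k+2) * Cb) * νr^k
                  = 1 * Cb * Real.exp 1^(k+1) * νr^(2*k+2) := by ring
              rw [hrest]
              apply mul_le_mul_of_nonneg_right _ (by positivity)
              apply mul_le_mul_of_nonneg_right _ (by positivity)
              apply mul_le_mul_of_nonneg_right _ (by linarith)
              linarith
    -- assemble bound 2
    have hμp1 : (0:ℝ) < μ^(k+1) := by positivity
    have hT2mul : T2 * μ^(k+1) = Real.exp 1^k * νr^(k+1) := by
      rw [hT2, hdχk, div_pow, mul_assoc, div_mul_cancel₀ _ (ne_of_gt hμp1)]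
    have hwrk : (Real.exp 1 * wr / μ)^k * μ^k = Real.exp 1^k * wr^k := by
      rw [div_pow, div_mul_cancel₀ _ (by positivity : (μ:ℝ)^k ≠ 0), mul_pow]
    have c1 : (χ:ℝ) * μ^(2*k+2) * (Pat.card:ℝ)
        ≤ μ^(2*k+2) * (Cb * ((n:ℝ) * ((n + (d+χ) - 2).choose k : ℝ))) := by
      calc (χ:ℝ) * μ^(2*k+2) * (Pat.card:ℝ)
          = μ^(2*k+2) * ((χ:ℝ)*(Pat.card:ℝ)) := by ring
        _ ≤ μ^(2*k+2) * (Cb * ((n:ℝ) * ((n + (d+χ) - 2).choose k : ℝ))) :=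
            mul_le_mul_of_nonneg_left hP2R (by positivity)
    have c2 : μ^(2*k+2) * (Cb * ((n:ℝ) * ((n + (d+χ) - 2).choose k : ℝ)))
        ≤ μ^(2*k+2) * (Cb * ((n:ℝ) * (Real.exp 1 * wr/μ)^k)) := by
      apply mul_le_mul_of_nonneg_left _ (by positivity)
      apply mul_le_mul_of_nonneg_left _ (by linarith)
      apply mul_le_mul_of_nonneg_left hSS (by positivity)
    have c3 : μ^(2*k+2) * (Cb * ((n:ℝ) * (Real.exp 1 * wr/μ)^k))
        = Cb * Real.exp 1^k * ((n:ℝ) * wr^k * μ^(k+2)) := by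
      calc μ^(2*k+2) * (Cb * ((n:ℝ) * (Real.exp 1*wr/μ)^k))
          = (Real.exp 1*wr/μ)^k * μ^k * (Cb * ((n:ℝ) * μ^(k+2))) := by ring
        _ = Real.exp 1^k * wr^k * (Cb * ((n:ℝ) * μ^(k+2))) := by rw [hwrk]
        _ = Cb * Real.exp 1^k * ((n:ℝ) * wr^k * μ^(k+2)) := by ring
    have c4 : Cb * Real.exp 1^k * ((n:ℝ) * wr^k * μ^(k+2))
        ≤ Cb * Real.exp 1^k * ((χ:ℝ) * Cb * Real.exp 1^(k+1) * νr^(2*k+2)) := by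
      apply mul_le_mul_of_nonneg_left core2 (by positivity)
    have c5 : Cb * Real.exp 1^k * ((χ:ℝ) * Cb * Real.exp 1^(k+1) * νr^(2*k+2))
        = (χ:ℝ) * μ^(2*k+2) * (Real.exp 1 * (Cb*T2)^2) := by
      have hsq : (Cb*T2)^2 * μ^(2*k+2) = Cb^2 * (Real.exp 1^k * νr^(k+1))^2 := by
        calc (Cb*T2)^2 * μ^(2*k+2) = Cb^2 * (T2*μ^(k+1))^2 := by ring
          _ = Cb^2 * (Real.exp 1^k * νr^(k+1))^2 := by rw [hT2mul]
      calc Cb * Real.exp 1^k * ((χ:ℝ) * Cb * Real.exp 1^(k+1) * νr^(2*k+2))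
          = (χ:ℝ) * (Real.exp 1 * (Cb^2 * (Real.exp 1^k*νr^(k+1))^2)) := by ring
        _ = (χ:ℝ) * (Real.exp 1 * ((Cb*T2)^2 * μ^(2*k+2))) := by rw [hsq]
        _ = (χ:ℝ) * μ^(2*k+2) * (Real.exp 1 * (Cb*T2)^2) := by ring
    have hPb2 : (Pat.card:ℝ) ≤ Real.exp 1 * (Cb * T2)^2 := by
      have hpos : (0:ℝ) < (χ:ℝ) * μ^(2*k+2) := by positivity
      have hchain : (χ:ℝ) * μ^(2*k+2) * (Pat.card:ℝ)
          ≤ (χ:ℝ) * μ^(2*k+2) * (Real.exp 1 * (Cb*T2)^2) := by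
        calc (χ:ℝ) * μ^(2*k+2) * (Pat.card:ℝ)
            ≤ μ^(2*k+2) * (Cb * ((n:ℝ) * ((n + (d+χ) - 2).choose k : ℝ))) := c1
          _ ≤ μ^(2*k+2) * (Cb * ((n:ℝ) * (Real.exp 1 * wr/μ)^k)) := c2
          _ = Cb * Real.exp 1^k * ((n:ℝ) * wr^k * μ^(k+2)) := c3
          _ ≤ Cb * Real.exp 1^k * ((χ:ℝ) * Cb * Real.exp 1^(k+1) * νr^(2*k+2)) := c4
          _ = (χ:ℝ) * μ^(2*k+2) * (Real.exp 1 * (Cb*T2)^2) := c5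
      exact le_of_mul_le_mul_left hchain hpos
    -- combine with min
    have hPemin : (Pat.card:ℝ) ≤ Real.exp 1 * (Cb * min T1 T2)^2 := by
      rcases le_total T1 T2 with h | h
      · rw [min_eq_left h]
        have h1 := TwoStageGT.le_e_sq hT1ge1 hCb1 he1
        linarith only [hPb1, h1]
      · rw [min_eq_right h]
        exact hPb2
    have hmin1 : (1:ℝ) ≤ min T1 T2 := le_min hT1ge1 hT2ge1
    have hCbβ1 : (1:ℝ) ≤ Cb * min T1 T2 := TwoStageGT.one_le_mul2 hCb1 hmin1
    have hlogP : Real.log (Pat.card:ℝ) ≤ 1 + 2 * Real.log (Cb * min T1 T2) := by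
      have hlog1 := Real.log_le_log (by linarith only [hP1R] : (0:ℝ) < (Pat.card:ℝ)) hPemin
      rw [Real.log_mul (Real.exp_ne_zero 1) (pow_ne_zero _ (ne_of_gt (by linarith only [hCbβ1]))), Real.log_exp,
        Real.log_pow] at hlog1
      push_cast at hlog1
      linarith only [hlog1]
    -- final arithmetic
    set c : ℝ := Real.exp 1 * ((d:ℝ)+χ)/χ with hcd
    have hc1 : 1 < c := by
      have hX : (1:ℝ) ≤ ((d:ℝ)+χ)/χ := by rw [le_div_iff₀ hχR]; linarith
      have h2 : (2:ℝ)*1 ≤ Real.exp 1 * (((d:ℝ)+χ)/χ) :=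
        mul_le_mul he2 hX (by norm_num) (by positivity)
      rw [hcd, mul_div_assoc]
      linarith only [h2]
    have htle : (t:ℝ) ≤ Real.log (Pat.card:ℝ)/ρ + 1 := by
      rw [ht]; push_cast
      have := Nat.floor_le (show (0:ℝ) ≤ Real.log (Pat.card:ℝ)/ρ by positivity)
      linarith only [this]
    have hdivle : Real.log (Pat.card:ℝ)/ρ ≤ c * Real.log (Pat.card:ℝ) := by
      rw [div_le_iff₀ hρpos]
      have hcρ : 1 ≤ c * ρ := by
        have h1 : c * ((χ:ℝ)/(Real.exp 1 * ((d:ℝ)+χ))) = 1 := by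
          rw [hcd]; field_simp
        calc (1:ℝ) = c * ((χ:ℝ)/(Real.exp 1 * ((d:ℝ)+χ))) := h1.symm
          _ ≤ c * ρ := by
              apply mul_le_mul_of_nonneg_left hρlb (by linarith only [hc1])
      calc Real.log (Pat.card:ℝ) = Real.log (Pat.card:ℝ) * 1 := by ring
        _ ≤ Real.log (Pat.card:ℝ) * (c*ρ) := by
            apply mul_le_mul_of_nonneg_left hcρ hlogPnn
        _ = c * Real.log (Pat.card:ℝ) * ρ := by ring
    set L : ℝ := Real.log (Cb * min T1 T2) with hL
    have hL0 : 0 ≤ L := Real.log_nonneg hCbβ1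
    have hgoal2 : 2 * Real.exp 1 * ((d:ℝ)+χ)/χ = 2*c := by rw [hcd]; ring
    rw [hgoal2]
    have hclogP : c * Real.log (Pat.card:ℝ) ≤ c * (1 + 2*L) := by
      apply mul_le_mul_of_nonneg_left hlogP (by linarith only [hc1])
    have hkey : 2*c*(1+L) - (c*(1+2*L) + 1) = c - 1 := by ring
    linarith only [htle, hdivle, hclogP, hc1, hkey]

  -- the algorithm
  set cons : (Fin t → Prop) → Finset (Finset (Fin n)) :=
    fun R => E.filter (fun e => ∀ i, (((M i) ∩ e).Nonempty ↔ R i)) with hconsdef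
  have hconsmem : ∀ (R : Fin t → Prop) (e : Finset (Fin n)),
      e ∈ cons R ↔ (e ∈ E ∧ ∀ i, (((M i) ∩ e).Nonempty ↔ R i)) := by
    intro R e
    rw [hconsdef]
    simp only [Finset.mem_filter]
  refine ⟨t, M, fun R => (cons R).sup id,
    fun R S => ((cons R).sup id).filter (fun v => S v), ?_⟩
  intro estar hestar
  dsimp only
  have hememb : estar ∈ cons (fun i => ((M i) ∩ estar).Nonempty) :=
    (hconsmem _ estar).mpr ⟨hestar, fun i => Iff.rfl⟩
  have hsub : estar ⊆ (cons (fun i => ((M i) ∩ estar).Nonempty)).sup id :=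
    Finset.le_sup (f := id) hememb
  have hconsq : (cons (fun i => ((M i) ∩ estar).Nonempty)).card ≤ q := by
    by_contra hcon
    push_neg at hcon
    have herase : q ≤ ((cons (fun i => ((M i) ∩ estar).Nonempty)).erase estar).card := by
      rw [Finset.card_erase_of_mem hememb]; omega
    obtain ⟨F, hFsub, hFcard⟩ := Finset.exists_subset_card_eq herase
    have hFsubE : F ⊆ E.erase estar := by
      intro f hf
      have h1 := hFsub hf
      rw [Finset.mem_erase] at h1 ⊢
      exact ⟨h1.1, ((hconsmem _ f).mp h1.2).1⟩
    have hzPat : (estar, sel estar F) ∈ Pat := by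
      rw [hPat]
      apply Finset.mem_biUnion.mpr
      exact ⟨estar, hestar, Finset.mem_image.mpr
        ⟨F, Finset.mem_powersetCard.mpr ⟨hFsubE, hFcard⟩, rfl⟩⟩
    obtain ⟨i, hcov1, hcov2⟩ := hfull _ hzPat
    obtain ⟨hselsub, -⟩ := hsel estar F ⟨hestar, hFsubE, hFcard⟩
    obtain ⟨v, hv⟩ := hcov2
    rw [Finset.mem_inter] at hv
    have hvsup := hselsub hv.2
    rw [Finset.mem_sdiff] at hvsup
    obtain ⟨f, hfF, hvf⟩ := Finset.mem_sup.mp hvsup.1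
    have hfcons : f ∈ cons (fun i => ((M i) ∩ estar).Nonempty) :=
      Finset.mem_of_mem_erase (hFsub hfF)
    have hiff := ((hconsmem _ f).mp hfcons).2 i
    have hne : (M i ∩ f).Nonempty := ⟨v, Finset.mem_inter.mpr ⟨hv.1, hvf⟩⟩
    rw [hiff] at hne
    rw [hcov1] at hne
    exact Finset.not_nonempty_empty hne
  have hUcard : ((cons (fun i => ((M i) ∩ estar).Nonempty)).sup id).card ≤ q * d := by
    calc ((cons (fun i => ((M i) ∩ estar).Nonempty)).sup id).card
        = ((cons (fun i => ((M i) ∩ estar).Nonempty)).biUnion id).card := by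
          rw [Finset.sup_eq_biUnion]
      _ ≤ ∑ e ∈ cons (fun i => ((M i) ∩ estar).Nonempty), (id e).card :=
          Finset.card_biUnion_le
      _ ≤ ∑ e ∈ cons (fun i => ((M i) ∩ estar).Nonempty), d := by
          apply Finset.sum_le_sum
          intro e he
          exact hEd e ((hconsmem _ e).mp he).1
      _ = (cons (fun i => ((M i) ∩ estar).Nonempty)).card * d := by
          rw [Finset.sum_const, smul_eq_mul]
      _ ≤ q * d := Nat.mul_le_mul_right d hconsq
  constructor
  · ext v
    simp only [Finset.mem_filter]
    constructor
    · rintro ⟨-, -, hv⟩; exact hv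
    · intro hv; exact ⟨hsub hv, hsub hv, hv⟩
  · have hUR : (((cons (fun i => ((M i) ∩ estar).Nonempty)).sup id).card : ℝ)
        ≤ (d:ℝ) * q := by
      have h := hUcard
      have : ((((cons (fun i => ((M i) ∩ estar).Nonempty)).sup id).card : ℕ) : ℝ)
          ≤ ((q * d : ℕ) : ℝ) := by exact_mod_cast h
      push_cast at this
      linarith
    linarith [hbudget, hUR]
end

section
/- Let E be a family of hyperedges on [n] of size at most d, and suppose there exists a constant q ≥ 1 such that for any q+1 distinct hyperedges e, e'_1,...,e'_q ∈ E it holds |(∪_{i=1}^q e'_i)\e| = Ω(d). Then there exists a trivial two-stage group testing algorithm that finds the defective hyperedge in E using t = O(log|E| + d) tests; in particular, if d = O(log|E|), this matches the information-theoretic lower bound Ω(log|E|) up to constants. -/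
set_option maxHeartbeats 1000000

open Finset

lemma sum_w_disjoint {n : ℕ} (p : ℝ) (S : Finset (Fin n)) :
    ∑ T ∈ (Finset.univ : Finset (Fin n)).powerset.filter (fun T => Disjoint T S),
      p ^ T.card * (1 - p) ^ (n - T.card) = (1 - p) ^ S.card := by
  have hfilt : (Finset.univ : Finset (Fin n)).powerset.filter (fun T => Disjoint T S)
      = Sᶜ.powerset := by
    ext T
    simp [Finset.subset_iff, Finset.disjoint_left]
  rw [hfilt]
  have hcomp : Sᶜ.card = n - S.card := by
    have := Finset.card_compl S
    simpa using this
  have hSn : S.card ≤ n := by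
    simpa using Finset.card_le_univ S
  calc ∑ T ∈ Sᶜ.powerset, p ^ T.card * (1 - p) ^ (n - T.card)
      = ∑ T ∈ Sᶜ.powerset, (p ^ T.card * (1 - p) ^ (Sᶜ.card - T.card)) * (1 - p) ^ S.card := by
        refine Finset.sum_congr rfl fun T hT => ?_
        have hTc : T.card ≤ Sᶜ.card := Finset.card_le_card (Finset.mem_powerset.1 hT)
        rw [mul_assoc, ← pow_add]
        congr 2
        omega
    _ = (1 - p) ^ S.card := by
        rw [← Finset.sum_mul, Finset.sum_pow_mul_eq_add_pow]
        simp


lemma sum_w_cover {n : ℕ} (p : ℝ) (A B : Finset (Fin n)) (hAB : Disjoint A B) :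
    ∑ T ∈ (Finset.univ : Finset (Fin n)).powerset.filter
        (fun T => Disjoint T A ∧ (T ∩ B).Nonempty),
      p ^ T.card * (1 - p) ^ (n - T.card)
      = (1 - p) ^ A.card * (1 - (1 - p) ^ B.card) := by
  classical
  set w : Finset (Fin n) → ℝ := fun T => p ^ T.card * (1 - p) ^ (n - T.card) with hw
  set U := (Finset.univ : Finset (Fin n)).powerset with hU
  have hsub : U.filter (fun T => Disjoint T (A ∪ B)) ⊆ U.filter (fun T => Disjoint T A) := by
    intro T hT
    simp only [Finset.mem_filter, Finset.disjoint_union_right] at hT ⊢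
    exact ⟨hT.1, hT.2.1⟩
  have hset : U.filter (fun T => Disjoint T A ∧ (T ∩ B).Nonempty)
      = U.filter (fun T => Disjoint T A) \ U.filter (fun T => Disjoint T (A ∪ B)) := by
    ext T
    simp only [Finset.mem_filter, Finset.mem_sdiff, Finset.disjoint_union_right,
      ← Finset.not_disjoint_iff_nonempty_inter]
    tauto
  rw [hset, Finset.sum_sdiff_eq_sub hsub]
  have h1 : ∑ T ∈ U.filter (fun T => Disjoint T A), w T = (1 - p) ^ A.card :=
    sum_w_disjoint p A
  have h2 : ∑ T ∈ U.filter (fun T => Disjoint T (A ∪ B)), w T = (1 - p) ^ (A ∪ B).card :=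
    sum_w_disjoint p (A ∪ B)
  rw [h1, h2, Finset.card_union_of_disjoint hAB, pow_add]
  ring

/-- Greedy covering: if each point of `P` is covered with weight at least `δ`,
then `k` tests suffice once `#P · (1-δ)^k < 1`. -/


lemma greedy_cover {ι κ : Type*} [DecidableEq ι] (W : Finset ι) (w : ι → ℝ)
    (hw1 : ∑ i ∈ W, w i = 1) (hwpos : ∀ i ∈ W, 0 < w i)
    (covers : ι → κ → Prop) [∀ i k, Decidable (covers i k)]
    (δ : ℝ) (hδ0 : 0 < δ) (hδ1 : δ < 1) :
    ∀ (k : ℕ) (P : Finset κ),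
      (∀ pr ∈ P, δ ≤ ∑ i ∈ W.filter (fun i => covers i pr), w i) →
      (P.card : ℝ) * (1 - δ) ^ k < 1 →
      ∃ L : List ι, L.length ≤ k ∧ ∀ pr ∈ P, ∃ T ∈ L, covers T pr := by
  intro k
  induction k with
  | zero =>
    intro P hcov hsmall
    simp only [pow_zero, mul_one] at hsmall
    have : P = ∅ := by
      rcases P.eq_empty_or_nonempty with h | h
      · exact h
      · exfalso
        have : (1 : ℝ) ≤ (P.card : ℝ) := by
          exact_mod_cast Nat.one_le_iff_ne_zero.2 (Finset.card_ne_zero_of_mem h.choose_spec)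
        linarith
    subst this
    exact ⟨[], by simp⟩
  | succ k ih =>
    intro P hcov hsmall
    rcases P.eq_empty_or_nonempty with hP | hP
    · subst hP; exact ⟨[], by simp⟩
    have hWne : W.Nonempty := by
      rcases W.eq_empty_or_nonempty with h | h
      · exfalso; rw [h] at hw1; simp at hw1
      · exact h
    -- averaging
    have havg : δ * P.card ≤ ∑ i ∈ W, w i * ((P.filter (fun pr => covers i pr)).card : ℝ) := by
      have hrw : ∀ i : ι, ((P.filter (fun pr => covers i pr)).card : ℝ)
          = ∑ pr ∈ P, (if covers i pr then (1:ℝ) else 0) := by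
        intro i
        rw [Finset.sum_boole]
      calc δ * P.card = ∑ pr ∈ P, δ := by rw [Finset.sum_const]; ring
        _ ≤ ∑ pr ∈ P, ∑ i ∈ W.filter (fun i => covers i pr), w i :=
            Finset.sum_le_sum hcov
        _ = ∑ pr ∈ P, ∑ i ∈ W, (if covers i pr then w i else 0) := by
            refine Finset.sum_congr rfl fun pr _ => ?_
            rw [Finset.sum_filter]
        _ = ∑ i ∈ W, ∑ pr ∈ P, (if covers i pr then w i else 0) := Finset.sum_comm
        _ = ∑ i ∈ W, w i * ((P.filter (fun pr => covers i pr)).card : ℝ) := by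
            refine Finset.sum_congr rfl fun i _ => ?_
            rw [hrw i, Finset.mul_sum]
            refine Finset.sum_congr rfl fun pr _ => ?_
            by_cases h : covers i pr <;> simp [h]
    -- there is a test covering at least a δ fraction
    have hex : ∃ i ∈ W, δ * P.card ≤ ((P.filter (fun pr => covers i pr)).card : ℝ) := by
      by_contra hcon
      push_neg at hcon
      have hlt : ∑ i ∈ W, w i * ((P.filter (fun pr => covers i pr)).card : ℝ)
          < ∑ i ∈ W, w i * (δ * P.card) := by
        refine Finset.sum_lt_sum_of_nonempty hWne fun i hi => ?_
        exact mul_lt_mul_of_pos_left (hcon i hi) (hwpos i hi)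
      rw [← Finset.sum_mul, hw1, one_mul] at hlt
      linarith
    obtain ⟨i₀, hi₀W, hi₀⟩ := hex
    set P' := P.filter (fun pr => ¬ covers i₀ pr) with hP'
    have hcard : (P'.card : ℝ) ≤ (1 - δ) * P.card := by
      have hsplit : (P.filter (fun pr => covers i₀ pr)).card + P'.card = P.card :=
        Finset.card_filter_add_card_filter_not _
      have : (P'.card : ℝ) = (P.card : ℝ) - ((P.filter (fun pr => covers i₀ pr)).card : ℝ) := by
        push_cast [← hsplit]; ring
      rw [this]; nlinarith
    have hsmall' : (P'.card : ℝ) * (1 - δ) ^ k < 1 := by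
      have h1δ : (0:ℝ) ≤ (1 - δ) ^ k := pow_nonneg (by linarith) k
      calc (P'.card : ℝ) * (1 - δ) ^ k ≤ ((1 - δ) * P.card) * (1 - δ) ^ k :=
            mul_le_mul_of_nonneg_right hcard h1δ
        _ = (P.card : ℝ) * (1 - δ) ^ (k + 1) := by ring
        _ < 1 := hsmall
    obtain ⟨L', hL'len, hL'⟩ := ih P' (fun pr hpr => hcov pr (Finset.filter_subset _ _ hpr)) hsmall'
    refine ⟨i₀ :: L', by simpa using hL'len, fun pr hpr => ?_⟩
    by_cases h : covers i₀ pr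
    · exact ⟨i₀, List.mem_cons_self, h⟩
    · obtain ⟨T, hT, hTc⟩ := hL' pr (Finset.mem_filter.2 ⟨hpr, h⟩)
      exact ⟨T, List.mem_cons_of_mem _ hT, hTc⟩


lemma delta_le_cover (d : ℕ) (hd : 0 < d) (c : ℝ) (hc : 0 < c)
    (a b : ℕ) (ha : a ≤ d) (hb : c * d ≤ (b : ℝ)) :
    (1 - Real.exp (-(c/2))) / 2
      ≤ (1 - 1/(2*(d:ℝ))) ^ a * (1 - (1 - 1/(2*(d:ℝ))) ^ b) := by
  set p : ℝ := 1/(2*(d:ℝ)) with hp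
  have hdR : (1:ℝ) ≤ (d:ℝ) := by exact_mod_cast hd
  have hp0 : 0 < p := by positivity
  have hphalf : p ≤ 1/2 := by
    rw [hp, div_le_div_iff₀ (by positivity) (by norm_num)]
    linarith
  have hdp : (d:ℝ) * p = 1/2 := by
    rw [hp]; field_simp
  -- first factor
  have h1 : (1:ℝ)/2 ≤ (1 - p) ^ a := by
    have hBern : 1 - (d:ℝ) * p ≤ (1 - p) ^ d := by
      have := one_add_mul_le_pow (a := -p) (by linarith) d
      calc 1 - (d:ℝ) * p = 1 + (d:ℕ) * (-p) := by push_cast; ring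
        _ ≤ (1 + -p) ^ d := this
        _ = (1 - p) ^ d := by ring_nf
    have hmono : (1 - p) ^ d ≤ (1 - p) ^ a :=
      pow_le_pow_of_le_one (by linarith) (by linarith) ha
    calc (1:ℝ)/2 = 1 - (d:ℝ) * p := by rw [hdp]; norm_num
      _ ≤ (1 - p) ^ d := hBern
      _ ≤ (1 - p) ^ a := hmono
  -- second factor
  have h2 : (1 - p) ^ b ≤ Real.exp (-(c/2)) := by
    have hle : 1 - p ≤ Real.exp (-p) := by
      have := Real.add_one_le_exp (-p)
      linarith
    calc (1 - p) ^ b ≤ (Real.exp (-p)) ^ b :=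
          pow_le_pow_left₀ (by linarith) hle b
      _ = Real.exp ((b:ℝ) * (-p)) := by
          rw [← Real.exp_nat_mul]
      _ ≤ Real.exp (-(c/2)) := by
          apply Real.exp_le_exp.2
          have : c/2 ≤ (b:ℝ) * p := by
            have : c * (d:ℝ) * p ≤ (b:ℝ) * p :=
              mul_le_mul_of_nonneg_right hb hp0.le
            calc c/2 = c * ((d:ℝ) * p) := by rw [hdp]; ring
              _ = c * (d:ℝ) * p := by ring
              _ ≤ (b:ℝ) * p := ‹c * (d:ℝ) * p ≤ (b:ℝ) * p›
          nlinarith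
  have hexp0 : 0 < Real.exp (-(c/2)) := Real.exp_pos _
  have h2' : 1 - Real.exp (-(c/2)) ≤ 1 - (1 - p) ^ b := by linarith
  have hnn : 0 ≤ 1 - Real.exp (-(c/2)) := by
    have : Real.exp (-(c/2)) ≤ 1 := by
      rw [Real.exp_le_one_iff]; linarith
    linarith
  calc (1 - Real.exp (-(c/2))) / 2 = (1/2) * (1 - Real.exp (-(c/2))) := by ring
    _ ≤ (1 - p) ^ a * (1 - (1 - p) ^ b) := by
        apply mul_le_mul h1 h2' hnn (by linarith)


/-- `Finset.mem_filter` with the decidability instance as a plain implicit argument,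
so that it unifies with whatever instance appears in the goal. -/
lemma mem_filter_poly {α : Type*} {p : α → Prop} {h : DecidablePred p} {s : Finset α} {a : α} :
    a ∈ @Finset.filter α p h s ↔ a ∈ s ∧ p a := @Finset.mem_filter α p h s a

/-- If for some constant `q ≥ 1` every `q+1` distinct hyperedges `e,e'_1,...,e'_q`
of `E` (sizes at most `d`) satisfy `|(∪ᵢ e'ᵢ)\e| ≥ c·d` (the `Ω(d)` hypothesis with
constant `c > 0`), then there is a trivial two-stage group testing algorithm
(non-adaptive first stage, individual tests in the second stage) that finds the
defective hyperedge using `O(log|E| + d)` tests. -/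
theorem trivial_two_stage_linear (q : ℕ) (hq : 1 ≤ q) (c : ℝ) (hc : 0 < c) :
    ∃ C : ℝ, 0 < C ∧ ∀ (n d : ℕ) (E : Finset (Finset (Fin n))), 0 < d →
      (∀ e ∈ E, e.card ≤ d) →
      (∀ e ∈ E, ∀ F ⊆ E.erase e, F.card = q →
        c * d ≤ (((F.sup id) \ e).card : ℝ)) →
      ∃ (t : ℕ) (M : Fin t → Finset (Fin n))
        (stage2 : (Fin t → Prop) → Finset (Fin n))
        (dec : (Fin t → Prop) → (Fin n → Prop) → Finset (Fin n)),
        ∀ estar ∈ E,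
          dec (fun i => ((M i) ∩ estar).Nonempty)
              (fun v => v ∈ stage2 (fun i => ((M i) ∩ estar).Nonempty) ∧ v ∈ estar)
            = estar ∧
          ((t : ℝ) + ((stage2 (fun i => ((M i) ∩ estar).Nonempty)).card : ℝ) ≤
            C * (Real.log E.card + d)) := by
  classical
  set δ : ℝ := (1 - Real.exp (-(c/2))) / 2 with hδdef
  have hexp1 : Real.exp (-(c/2)) < 1 := by
    rw [Real.exp_lt_one_iff]; linarith
  have hexp0 : 0 < Real.exp (-(c/2)) := Real.exp_pos _
  have hδ0 : 0 < δ := by rw [hδdef]; linarith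
  have hδ1 : δ < 1 := by rw [hδdef]; linarith
  set lam : ℝ := -Real.log (1 - δ) with hlamdef
  have hlam0 : 0 < lam := by
    have : Real.log (1 - δ) < 0 := Real.log_neg (by linarith) (by linarith)
    rw [hlamdef]; linarith
  refine ⟨((q:ℝ)+1)/lam + (q:ℝ) + 1, by positivity, ?_⟩
  intro n d E hd hcard hexpand
  -- set of "bad pairs" to be covered by the first-stage tests
  set Pairs : Finset (Finset (Fin n) × Finset (Finset (Fin n))) :=
    E.biUnion (fun e => ((E.erase e).powersetCard q).image (fun F => (e, F))) with hPairs
  have hPairsMem : ∀ pr ∈ Pairs, pr.1 ∈ E ∧ pr.2 ⊆ E.erase pr.1 ∧ pr.2.card = q := by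
    intro pr hpr
    simp only [hPairs, Finset.mem_biUnion, Finset.mem_image, Finset.mem_powersetCard] at hpr
    obtain ⟨e, he, F, ⟨hF1, hF2⟩, hpr⟩ := hpr
    rw [← hpr]
    exact ⟨he, hF1, hF2⟩
  set p : ℝ := 1/(2*(d:ℝ)) with hp
  have hdR : (1:ℝ) ≤ (d:ℝ) := by exact_mod_cast hd
  have hp0 : 0 < p := by rw [hp]; positivity
  have hp1 : p < 1 := by
    rw [hp, div_lt_one (by positivity)]; linarith
  set w : Finset (Fin n) → ℝ := fun T => p ^ T.card * (1 - p) ^ (n - T.card) with hw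
  have hwsum : ∑ T ∈ (Finset.univ : Finset (Fin n)).powerset, w T = 1 := by
    have h := sum_w_disjoint (n := n) p ∅
    simpa using h
  have hwpos : ∀ T ∈ (Finset.univ : Finset (Fin n)).powerset, 0 < w T := by
    intro T _
    rw [hw]
    have : 0 < 1 - p := by linarith
    positivity
  -- each pair is covered with probability at least δ
  have hpair : ∀ pr ∈ Pairs,
      δ ≤ ∑ T ∈ (Finset.univ : Finset (Fin n)).powerset.filter
        (fun T => Disjoint T pr.1 ∧ (T ∩ (pr.2.sup id \ pr.1)).Nonempty), w T := by
    intro pr hpr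
    obtain ⟨he, hF, hFq⟩ := hPairsMem pr hpr
    have hdisj : Disjoint pr.1 (pr.2.sup id \ pr.1) := Finset.disjoint_sdiff
    rw [sum_w_cover p pr.1 (pr.2.sup id \ pr.1) hdisj]
    exact delta_le_cover d hd c hc pr.1.card (pr.2.sup id \ pr.1).card
      (hcard _ he) (hexpand pr.1 he pr.2 hF hFq)
  -- number of tests
  set x : ℝ := ((q:ℝ)+1) * Real.log E.card / lam with hx
  set k : ℕ := ⌊x⌋₊ + 1 with hk
  have hsmall : (Pairs.card : ℝ) * (1 - δ) ^ k < 1 := by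
    have hPcard : Pairs.card ≤ E.card ^ (q+1) := by
      calc Pairs.card ≤ ∑ e ∈ E, (((E.erase e).powersetCard q).image (fun F => (e, F))).card :=
            Finset.card_biUnion_le
        _ ≤ ∑ _e ∈ E, E.card ^ q := by
            refine Finset.sum_le_sum fun e _ => ?_
            calc (((E.erase e).powersetCard q).image (fun F => (e, F))).card
                ≤ ((E.erase e).powersetCard q).card := Finset.card_image_le
              _ = (E.erase e).card.choose q := Finset.card_powersetCard _ _
              _ ≤ (E.erase e).card ^ q := Nat.choose_le_pow _ _
              _ ≤ E.card ^ q := Nat.pow_le_pow_left (Finset.card_le_card (Finset.erase_subset _ _)) q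
        _ = E.card * E.card ^ q := by rw [Finset.sum_const, smul_eq_mul]
        _ = E.card ^ (q+1) := by ring
    rcases Nat.eq_zero_or_pos E.card with hE0 | hE1
    · have : Pairs.card = 0 := by
        have := hPcard
        rw [hE0] at this
        simpa [Nat.zero_pow (by omega : 0 < q + 1)] using this
      rw [this]
      norm_num
    · have hEc : (1:ℝ) ≤ (E.card : ℝ) := by exact_mod_cast hE1
      have hklam : ((q:ℝ)+1) * Real.log E.card < (k:ℝ) * lam := by
        have hxk : x < (k:ℝ) := by
          rw [hk]
          push_cast
          exact Nat.lt_floor_add_one x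
        have := mul_lt_mul_of_pos_right hxk hlam0
        rwa [hx, div_mul_cancel₀ _ hlam0.ne'] at this
      have harg : ((q:ℝ)+1) * Real.log E.card + (k:ℝ) * Real.log (1 - δ) < 0 := by
        have : (k:ℝ) * Real.log (1 - δ) = -((k:ℝ) * lam) := by rw [hlamdef]; ring
        rw [this]; linarith
      calc (Pairs.card : ℝ) * (1 - δ) ^ k
          ≤ (E.card : ℝ) ^ (q+1) * (1 - δ) ^ k := by
            apply mul_le_mul_of_nonneg_right _ (pow_nonneg (by linarith) k)
            exact_mod_cast hPcard
        _ = Real.exp (((q:ℝ)+1) * Real.log E.card + (k:ℝ) * Real.log (1 - δ)) := by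
            rw [Real.exp_add]
            congr 1
            · have hlogrw : ((q:ℝ)+1) * Real.log E.card = Real.log ((E.card:ℝ)^(q+1)) := by
                rw [Real.log_pow]; push_cast; ring
              rw [hlogrw, Real.exp_log (by positivity)]
            · rw [← Real.log_pow, Real.exp_log (pow_pos (by linarith) k)]
        _ < 1 := by
            rw [Real.exp_lt_one_iff]
            exact harg
  obtain ⟨L, hLlen, hLcov⟩ := greedy_cover (Finset.univ : Finset (Fin n)).powerset w hwsum hwpos
    (fun T pr => Disjoint T pr.1 ∧ (T ∩ (pr.2.sup id \ pr.1)).Nonempty) δ hδ0 hδ1 k Pairs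
    hpair hsmall
  refine ⟨L.length, fun i => L.get i,
    fun o => (E.filter (fun e => ∀ i, o i ↔ ((L.get i) ∩ e).Nonempty)).sup id,
    fun _o pred => Finset.univ.filter pred, ?_⟩
  intro estar hestar
  constructor
  · beta_reduce
    ext v
    simp only [Finset.mem_filter, Finset.mem_univ, true_and, Finset.mem_sup, id_eq]
    constructor
    · exact fun h => h.2
    · intro hv
      exact ⟨⟨estar, ⟨hestar, fun i => Iff.rfl⟩, hv⟩, hv⟩
  · -- cardinality bound
    have hcount : ∀ Cns : Finset (Finset (Fin n)), Cns ⊆ E → estar ∈ Cns →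
        (∀ e' ∈ Cns, ∀ i : Fin L.length,
          (((L.get i) ∩ estar).Nonempty ↔ ((L.get i) ∩ e').Nonempty)) →
        ((Cns.sup id).card : ℝ) ≤ (q:ℝ) * d := by
      intro Cns hCnsE hestarC hconsist
      have hConsq : Cns.card ≤ q := by
        by_contra hgt
        push_neg at hgt
        have hq' : q ≤ (Cns.erase estar).card := by
          rw [Finset.card_erase_of_mem hestarC]
          omega
        obtain ⟨F, hFsub, hFcard⟩ := Finset.exists_subset_card_eq hq'
        have hFE : F ⊆ E.erase estar :=
          hFsub.trans (Finset.erase_subset_erase _ hCnsE)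
        have hmem : (estar, F) ∈ Pairs := by
          simp only [hPairs, Finset.mem_biUnion, Finset.mem_image, Finset.mem_powersetCard]
          exact ⟨estar, hestar, F, ⟨hFE, hFcard⟩, rfl⟩
        obtain ⟨T, hTL, hTcov⟩ := hLcov _ hmem
        obtain ⟨i, hi⟩ := List.mem_iff_get.1 hTL
        obtain ⟨hdisj, v, hv⟩ := hTcov
        rw [Finset.mem_inter, Finset.mem_sdiff] at hv
        obtain ⟨hvT, hvsup, hvnot⟩ := hv
        obtain ⟨e', he'F, hve'⟩ := Finset.mem_sup.1 hvsup
        have he'Cns : e' ∈ Cns := Finset.mem_of_mem_erase (hFsub he'F)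
        have hiff := hconsist e' he'Cns i
        rw [hi] at hiff
        have : (T ∩ estar).Nonempty := hiff.2 ⟨v, Finset.mem_inter.2 ⟨hvT, hve'⟩⟩
        obtain ⟨u, hu⟩ := this
        rw [Finset.mem_inter] at hu
        exact (Finset.disjoint_left.1 hdisj hu.1) hu.2
      have h1 : (Cns.sup id).card ≤ Cns.card * d := by
        rw [Finset.sup_eq_biUnion]
        calc (Cns.biUnion id).card ≤ ∑ e ∈ Cns, (id e).card := Finset.card_biUnion_le
          _ ≤ Cns.card * d := by
            rw [← smul_eq_mul]
            exact Finset.sum_le_card_nsmul _ _ _ (fun e he => hcard e (hCnsE he))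
      have h2 : Cns.card * d ≤ q * d := Nat.mul_le_mul_right d hConsq
      exact_mod_cast h1.trans h2
    have hEc : (1:ℝ) ≤ (E.card : ℝ) := by
      have : 0 < E.card := Finset.card_pos.2 ⟨estar, hestar⟩
      exact_mod_cast this
    have hlogE : 0 ≤ Real.log E.card := Real.log_nonneg hEc
    have hx0 : 0 ≤ x := by
      rw [hx]; positivity
    have ht : (L.length : ℝ) ≤ x + 1 := by
      have h1 : (L.length : ℝ) ≤ (k : ℝ) := by exact_mod_cast hLlen
      have h2 : (k : ℝ) ≤ x + 1 := by
        rw [hk]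
        push_cast
        have := Nat.floor_le hx0
        linarith
      linarith
    have hfinal : x + 1 + (q:ℝ) * d
        ≤ (((q:ℝ)+1)/lam + (q:ℝ) + 1) * (Real.log E.card + d) := by
      have hxval : x = ((q:ℝ)+1)/lam * Real.log E.card := by rw [hx]; ring
      have hqR : (1:ℝ) ≤ (q:ℝ) := by exact_mod_cast hq
      have hnn : 0 ≤ ((q:ℝ)+1)/lam * (d:ℝ) := by positivity
      have h3 : 0 ≤ ((q:ℝ)+1) * Real.log E.card := by positivity
      have hexpand2 : (((q:ℝ)+1)/lam + (q:ℝ) + 1) * (Real.log E.card + d)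
          = ((q:ℝ)+1)/lam * Real.log E.card + ((q:ℝ)+1) * Real.log E.card
            + ((q:ℝ)+1)/lam * (d:ℝ) + ((q:ℝ)+1) * d := by ring
      rw [hexpand2, hxval]
      nlinarith
    beta_reduce
    refine le_trans (add_le_add ht (hcount _ ?_ ?_ ?_)) hfinal
    · intro z hz
      rw [mem_filter_poly] at hz
      exact hz.1
    · rw [mem_filter_poly]
      exact ⟨hestar, fun i => Iff.rfl⟩
    · intro e' he' i
      rw [mem_filter_poly] at he'
      exact he'.2 i
end
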